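/- arXiv:1211.6229 — 10 statements merged into one kernel-verified Lean document; each statement's English description precedes it below -/
import Mathlib

section
/- If the set Ω¹_I contains at least two distinct points, then Ω¹_I is an open subset of ℚ: for every ε ∈ Ω¹_I there is a neighborhood of ε in ℚ contained in Ω¹_I. -/
/-- The set Ω¹_I (strict inequalities outside I). -/
def Omega1 {m n : ℕ} (A : Matrix (Fin m) (Fin n) ℚ) (B C : Fin m → ℚ)
    (I : Finset (Fin m)) : Set ℚ :=
  {ε | ∃ x : Fin n → ℚ, (∀ i ∈ I, A.mulVec x i = B i + ε * C i) ∧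
    (∀ i ∉ I, B i + ε * C i < A.mulVec x i)}

/-- If Ω¹_I contains at least two distinct points, then Ω¹_I is an
open subset of ℚ: every ε ∈ Ω¹_I has a neighborhood contained in Ω¹_I. -/
theorem Omega1_open_of_two_points
    (m n : ℕ) (A : Matrix (Fin m) (Fin n) ℚ) (B C : Fin m → ℚ)
    (I : Finset (Fin m))
    (htwo : ∃ ε₁ ε₂ : ℚ, ε₁ ≠ ε₂ ∧ ε₁ ∈ Omega1 A B C I ∧ ε₂ ∈ Omega1 A B C I) :
    ∀ ε ∈ Omega1 A B C I, ∃ δ : ℚ, 0 < δ ∧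
      ∀ η : ℚ, |η - ε| < δ → η ∈ Omega1 A B C I := by
  obtain ⟨ε₁, ε₂, hne, ⟨x₁, h₁e, _⟩, ⟨x₂, h₂e, _⟩⟩ := htwo
  rintro ε ⟨x, hxe, hxs⟩
  have hsub : ε₂ - ε₁ ≠ 0 := sub_ne_zero.mpr hne.symm
  set d : Fin n → ℚ := (ε₂ - ε₁)⁻¹ • (x₂ - x₁) with hd
  have hdI : ∀ i ∈ I, A.mulVec d i = C i := by
    intro i hi
    have hmv : A.mulVec d = (ε₂ - ε₁)⁻¹ • (A.mulVec x₂ - A.mulVec x₁) := by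
      rw [hd, Matrix.mulVec_smul, Matrix.mulVec_sub]
    rw [hmv]
    simp only [Pi.smul_apply, Pi.sub_apply, h₁e i hi, h₂e i hi, smul_eq_mul]
    field_simp
    ring
  set g : Fin m → ℚ := fun i => A.mulVec x i - B i - ε * C i with hg
  set q : Fin m → ℚ := fun i => g i / (|A.mulVec d i - C i| + 1) with hq
  set S : Finset ℚ := insert 1 ((Finset.univ.filter (fun i => i ∉ I)).image q) with hS
  have hSne : S.Nonempty := ⟨1, Finset.mem_insert_self _ _⟩
  refine ⟨S.min' hSne, ?_, ?_⟩
  · rw [Finset.lt_min'_iff]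
    intro b hb
    rw [hS, Finset.mem_insert, Finset.mem_image] at hb
    rcases hb with rfl | ⟨i, hi, rfl⟩
    · norm_num
    · rw [Finset.mem_filter] at hi
      have hgi : 0 < g i := by
        have := hxs i hi.2
        show 0 < A.mulVec x i - B i - ε * C i; linarith
      have hden : 0 < |A.mulVec d i - C i| + 1 := by positivity
      exact div_pos hgi hden
  · intro η hη
    have hmv : ∀ i, A.mulVec (fun k => x k + (η - ε) * d k) i
        = A.mulVec x i + (η - ε) * A.mulVec d i := by
      intro i
      have he : (fun k => x k + (η - ε) * d k) = x + (η - ε) • d := by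
        funext k; simp [smul_eq_mul]
      rw [he, Matrix.mulVec_add, Matrix.mulVec_smul]
      simp [smul_eq_mul]
    refine ⟨fun k => x k + (η - ε) * d k, ?_, ?_⟩
    · intro i hi
      rw [hmv, hxe i hi, hdI i hi]; ring
    · intro i hi
      have hgi : 0 < g i := by
        have := hxs i hi
        show 0 < A.mulVec x i - B i - ε * C i; linarith
      have hqi : S.min' hSne ≤ q i := by
        apply Finset.min'_le
        rw [hS, Finset.mem_insert, Finset.mem_image]
        exact Or.inr ⟨i, Finset.mem_filter.mpr ⟨Finset.mem_univ i, hi⟩, rfl⟩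
      have habs : |η - ε| < q i := lt_of_lt_of_le hη hqi
      set a : ℚ := A.mulVec d i - C i with ha
      have hden : 0 < |a| + 1 := by positivity
      have h1 : |η - ε| * (|a| + 1) < g i := by
        rw [hq] at habs
        exact (lt_div_iff₀ hden).mp habs
      have h2 : -(|η - ε| * |a|) ≤ (η - ε) * a := by
        have := neg_abs_le ((η - ε) * a)
        rwa [abs_mul] at this
      have h3 : |η - ε| * |a| ≤ |η - ε| * (|a| + 1) := by
        have := abs_nonneg (η - ε)
        nlinarith
      rw [hmv]
      have hx : A.mulVec x i = g i + B i + ε * C i := by show _ = A.mulVec x i - B i - ε * C i + B i + ε * C i; ring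
      have hda : A.mulVec d i = a + C i := by rw [ha]; ring
      rw [hx, hda]
      nlinarith
end

section
/- For ε₁ ∈ Ω¹_I and ε₂ ∈ Ω⁰_I, every point of the half-open segment between ε₁ (included) and ε₂ (excluded) lies in Ω¹_I. In particular Ω⁰_I is contained in the closure of Ω¹_I whenever Ω¹_I is nonempty. -/
/-- The set Ω⁰_I (weak inequalities outside I). -/
def Omega0 {m n : ℕ} (A : Matrix (Fin m) (Fin n) ℚ) (B C : Fin m → ℚ)
    (I : Finset (Fin m)) : Set ℚ :=
  {ε | ∃ x : Fin n → ℚ, (∀ i ∈ I, A.mulVec x i = B i + ε * C i) ∧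
    (∀ i ∉ I, B i + ε * C i ≤ A.mulVec x i)}

/-- For ε₁ ∈ Ω¹_I and ε₂ ∈ Ω⁰_I, every point λε₁ + (1−λ)ε₂ with
rational λ ∈ (0,1] lies in Ω¹_I. In particular, whenever Ω¹_I is nonempty,
Ω⁰_I is contained in the closure of Ω¹_I. -/
theorem halfopen_segment_in_Omega1
    (m n : ℕ) (A : Matrix (Fin m) (Fin n) ℚ) (B C : Fin m → ℚ)
    (I : Finset (Fin m)) :
    (∀ ε₁ ∈ Omega1 A B C I, ∀ ε₂ ∈ Omega0 A B C I, ∀ lam : ℚ,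
        0 < lam → lam ≤ 1 → lam * ε₁ + (1 - lam) * ε₂ ∈ Omega1 A B C I) ∧
    ((Omega1 A B C I).Nonempty →
        Omega0 A B C I ⊆ closure (Omega1 A B C I)) := by
  have main : ∀ ε₁ ∈ Omega1 A B C I, ∀ ε₂ ∈ Omega0 A B C I, ∀ lam : ℚ,
      0 < lam → lam ≤ 1 → lam * ε₁ + (1 - lam) * ε₂ ∈ Omega1 A B C I := by
    rintro ε₁ ⟨x₁, hx₁e, hx₁s⟩ ε₂ ⟨x₂, hx₂e, hx₂w⟩ lam hl0 hl1
    refine ⟨lam • x₁ + (1 - lam) • x₂, ?_, ?_⟩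
    · intro i hi
      have : A.mulVec (lam • x₁ + (1 - lam) • x₂) i
          = lam * A.mulVec x₁ i + (1 - lam) * A.mulVec x₂ i := by
        simp [Matrix.mulVec_add, Matrix.mulVec_smul, Pi.add_apply, Pi.smul_apply,
          smul_eq_mul]
      rw [this, hx₁e i hi, hx₂e i hi]; ring
    · intro i hi
      have hv : A.mulVec (lam • x₁ + (1 - lam) • x₂) i
          = lam * A.mulVec x₁ i + (1 - lam) * A.mulVec x₂ i := by
        simp [Matrix.mulVec_add, Matrix.mulVec_smul, Pi.add_apply, Pi.smul_apply,
          smul_eq_mul]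
      have h1 := hx₁s i hi
      have h2 := hx₂w i hi
      rw [hv]
      nlinarith [h1, h2, hl0, hl1]
  refine ⟨main, ?_⟩
  rintro ⟨ε₁, hε₁⟩ ε₂ hε₂
  rw [Metric.mem_closure_iff]
  intro δ hδ
  obtain ⟨q, hq0, hqδ⟩ := exists_rat_btwn hδ
  have hq0' : (0 : ℚ) < q := by exact_mod_cast hq0
  set D : ℚ := |ε₁ - ε₂| with hD
  have hD0 : 0 ≤ D := abs_nonneg _
  set lam : ℚ := min 1 (q / (D + 1)) with hlam
  have hl0 : 0 < lam := lt_min one_pos (div_pos hq0' (by linarith))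
  have hl1 : lam ≤ 1 := min_le_left _ _
  have hmem := main ε₁ hε₁ ε₂ hε₂ lam hl0 hl1
  refine ⟨lam * ε₁ + (1 - lam) * ε₂, hmem, ?_⟩
  have hdist : dist ε₂ (lam * ε₁ + (1 - lam) * ε₂) = ((lam * D : ℚ) : ℝ) := by
    rw [Rat.dist_eq]
    push_cast
    rw [show ((ε₂ : ℝ) - (lam * ε₁ + (1 - lam) * ε₂)) = lam * (ε₂ - ε₁) by ring]
    rw [abs_mul, abs_of_pos (by exact_mod_cast hl0)]
    rw [show ((ε₂ : ℝ) - ε₁) = -((ε₁ : ℝ) - ε₂) by ring, abs_neg, hD]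
    push_cast
    ring
  have hlD : lam * D < q := by
    have hle : lam ≤ q / (D + 1) := min_le_right _ _
    have : lam * D ≤ q / (D + 1) * D := by
      apply mul_le_mul_of_nonneg_right hle hD0
    calc lam * D ≤ q / (D + 1) * D := this
      _ < q := by
          rw [div_mul_eq_mul_div, div_lt_iff₀ (by linarith)]
          nlinarith
  rw [hdist]
  calc ((lam * D : ℚ) : ℝ) < (q : ℝ) := by exact_mod_cast hlD
    _ < δ := hqδ
end

section
/- Suppose there is no nonzero x ∈ ℝ^n with Ax ≥ 0, Ω¹_I(ℝ) contains at least two points, and the supremum ε₀ of Ω¹_I(ℝ) is finite. Then ε₀ ∈ Ω⁰_I(ℝ), i.e., there exists x₀ ∈ ℝ^n with A_I x₀ = B_I + ε₀C_I and A_{Ī} x₀ ≥ B_{Ī} + ε₀C_{Ī}. -/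
/-- The set Ω¹_I(ℝ) for a rational matrix A and rational vectors B, C viewed over ℝ. -/
def Omega1R {m n : ℕ} (A : Matrix (Fin m) (Fin n) ℚ) (B C : Fin m → ℚ)
    (I : Finset (Fin m)) : Set ℝ :=
  {ε | ∃ x : Fin n → ℝ,
    (∀ i ∈ I, (A.map (Rat.cast : ℚ → ℝ)).mulVec x i = (B i : ℝ) + ε * (C i : ℝ)) ∧
    (∀ i ∉ I, (B i : ℝ) + ε * (C i : ℝ) < (A.map (Rat.cast : ℚ → ℝ)).mulVec x i)}

lemma cont_mulVec_aux {m n : ℕ} (A' : Matrix (Fin m) (Fin n) ℝ) (i : Fin m) :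
    Continuous fun x : Fin n → ℝ => A'.mulVec x i := by
  simp only [Matrix.mulVec, dotProduct]
  exact continuous_finset_sum _ fun j _ => (continuous_const.mul (continuous_apply j))

lemma exists_c_aux {m n : ℕ} (A' : Matrix (Fin m) (Fin n) ℝ)
    (hA : ∀ x : Fin n → ℝ, (∀ i, 0 ≤ A'.mulVec x i) → x = 0) :
    ∃ c > (0:ℝ), ∀ x : Fin n → ℝ, x ≠ 0 → ∃ i, A'.mulVec x i ≤ -c * ‖x‖ := by
  rcases Nat.eq_zero_or_pos m with hm | hm
  · refine ⟨1, one_pos, fun x hx => ?_⟩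
    subst hm
    exact absurd (hA x fun i => i.elim0) hx
  rcases Nat.eq_zero_or_pos n with hn | hn
  · refine ⟨1, one_pos, fun x hx => ?_⟩
    subst hn
    exact absurd (funext fun j : Fin 0 => j.elim0) hx
  haveI : Nonempty (Fin m) := Fin.pos_iff_nonempty.mp hm
  haveI : Nonempty (Fin n) := Fin.pos_iff_nonempty.mp hn
  have hne : (Finset.univ : Finset (Fin m)).Nonempty := Finset.univ_nonempty
  set h : (Fin n → ℝ) → ℝ := fun x => Finset.univ.inf' hne fun i => A'.mulVec x i with hh
  have hcont : Continuous h :=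
    Continuous.finset_inf'_apply hne fun i _ => cont_mulVec_aux A' i
  have hSne : (Metric.sphere (0 : Fin n → ℝ) 1).Nonempty := by
    haveI : Nontrivial (Fin n → ℝ) := by infer_instance
    exact NormedSpace.sphere_nonempty.mpr zero_le_one
  obtain ⟨xs, hxsmem, hxsmax⟩ :=
    (isCompact_sphere (0 : Fin n → ℝ) 1).exists_isMaxOn hSne hcont.continuousOn
  have hxs0 : xs ≠ 0 := by
    intro h0
    have := mem_sphere_zero_iff_norm.mp hxsmem
    rw [h0, norm_zero] at this; exact zero_ne_one this
  have hxneg : h xs < 0 := by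
    by_contra hge
    push_neg at hge
    refine hxs0 (hA xs fun i => ?_)
    exact le_trans hge (Finset.inf'_le _ (Finset.mem_univ i))
  refine ⟨-h xs, by linarith, fun x hx => ?_⟩
  have hnx : (0:ℝ) < ‖x‖ := norm_pos_iff.mpr hx
  set y : Fin n → ℝ := ‖x‖⁻¹ • x with hy
  have hymem : y ∈ Metric.sphere (0 : Fin n → ℝ) 1 := by
    rw [mem_sphere_zero_iff_norm, norm_smul, norm_inv, norm_norm]
    field_simp
  have hyle : h y ≤ h xs := hxsmax hymem
  obtain ⟨i, -, hieq⟩ := Finset.exists_mem_eq_inf' hne fun i => A'.mulVec y i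
  have hyi : A'.mulVec y i ≤ h xs := hieq ▸ hyle
  refine ⟨i, ?_⟩
  have hxy : x = ‖x‖ • y := by
    rw [hy, smul_smul]
    field_simp
    rw [one_smul]
  have key : A'.mulVec x i = ‖x‖ * A'.mulVec y i := by
    conv_lhs => rw [hxy]
    rw [Matrix.mulVec_smul, Pi.smul_apply, smul_eq_mul]
  rw [key]
  nlinarith

/-- If Ax ≥ 0 has no nonzero real solution, Ω¹_I(ℝ) contains at
least two points, and ε₀ is the (finite) supremum of Ω¹_I(ℝ), then ε₀ ∈ Ω⁰_I(ℝ):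
there exists x₀ with A_I x₀ = B_I + ε₀C_I and A_{Ī} x₀ ≥ B_{Ī} + ε₀C_{Ī}. -/
theorem sup_mem_Omega0R
    (m n : ℕ) (A : Matrix (Fin m) (Fin n) ℚ) (B C : Fin m → ℚ)
    (hA : ∀ x : Fin n → ℝ,
      (∀ i : Fin m, 0 ≤ (A.map (Rat.cast : ℚ → ℝ)).mulVec x i) → x = 0)
    (I : Finset (Fin m)) (ε₀ : ℝ)
    (htwo : ∃ ε₁ ε₂ : ℝ, ε₁ ≠ ε₂ ∧ ε₁ ∈ Omega1R A B C I ∧ ε₂ ∈ Omega1R A B C I)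
    (hsup : IsLUB (Omega1R A B C I) ε₀) :
    ∃ x₀ : Fin n → ℝ,
      (∀ i ∈ I, (A.map (Rat.cast : ℚ → ℝ)).mulVec x₀ i = (B i : ℝ) + ε₀ * (C i : ℝ)) ∧
      (∀ i ∉ I, (B i : ℝ) + ε₀ * (C i : ℝ) ≤ (A.map (Rat.cast : ℚ → ℝ)).mulVec x₀ i) := by
  classical
  set A' : Matrix (Fin m) (Fin n) ℝ := A.map (Rat.cast : ℚ → ℝ) with hA'
  obtain ⟨c, hc, hcx⟩ := exists_c_aux A' hA
  -- choose a sequence in Omega1R tending to ε₀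
  have hseq : ∀ k : ℕ, ∃ ε ∈ Omega1R A B C I, ε₀ - 1/(k+1) < ε ∧ ε ≤ ε₀ := by
    intro k
    have : ε₀ - 1/((k:ℝ)+1) < ε₀ := by
      have : (0:ℝ) < 1/((k:ℝ)+1) := by positivity
      linarith
    exact hsup.exists_between this
  choose u hu humem hule using hseq
  have hulow : ∀ k : ℕ, ε₀ - 1 ≤ u k := by
    intro k
    have h1 : 1/((k:ℝ)+1) ≤ 1 := by
      rw [div_le_one (by positivity)]
      have : (0:ℝ) ≤ (k:ℝ) := Nat.cast_nonneg k
      linarith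
    have := humem k
    linarith
  have hutend : Filter.Tendsto u Filter.atTop (nhds ε₀) := by
    have hlow : Filter.Tendsto (fun k : ℕ => ε₀ - 1/((k:ℝ)+1)) Filter.atTop (nhds ε₀) := by
      have : Filter.Tendsto (fun n : ℕ => 1 / ((n : ℝ) + 1)) Filter.atTop (nhds 0) :=
        tendsto_one_div_add_atTop_nhds_zero_nat
      have := Filter.Tendsto.const_sub ε₀ this
      simpa using this
    exact tendsto_of_tendsto_of_tendsto_of_le_of_le hlow tendsto_const_nhds
      (fun k => le_of_lt (humem k)) hule
  -- witnesses
  choose x hxI hxIc using fun k => hu k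
  -- bound
  set M : ℝ := ∑ i : Fin m, (|(B i : ℝ)| + (|ε₀| + 1) * |(C i : ℝ)|) with hM
  have hM0 : 0 ≤ M := Finset.sum_nonneg fun i _ => by positivity
  have hlb : ∀ k (i : Fin m), -M ≤ (B i : ℝ) + u k * (C i : ℝ) := by
    intro k i
    have huk : |u k| ≤ |ε₀| + 1 := by
      rw [abs_le]
      constructor
      · have := hulow k
        have : -|ε₀| ≤ ε₀ := neg_abs_le ε₀
        nlinarith [hulow k, neg_abs_le ε₀]
      · have := hule k
        have := le_abs_self ε₀
        linarith
    have h1 : |(B i : ℝ) + u k * (C i : ℝ)| ≤ |(B i : ℝ)| + (|ε₀| + 1) * |(C i : ℝ)| := by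
      calc |(B i : ℝ) + u k * (C i : ℝ)| ≤ |(B i : ℝ)| + |u k * (C i : ℝ)| := abs_add_le _ _
        _ = |(B i : ℝ)| + |u k| * |(C i : ℝ)| := by rw [abs_mul]
        _ ≤ |(B i : ℝ)| + (|ε₀| + 1) * |(C i : ℝ)| := by
            have := abs_nonneg ((C i : ℝ))
            nlinarith
    have h2 : |(B i : ℝ)| + (|ε₀| + 1) * |(C i : ℝ)| ≤ M := by
      rw [hM]
      exact Finset.single_le_sum (f := fun i => |(B i : ℝ)| + (|ε₀| + 1) * |(C i : ℝ)|)
        (fun i _ => by positivity) (Finset.mem_univ i)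
    have := neg_abs_le ((B i : ℝ) + u k * (C i : ℝ))
    linarith
  have hxbound : ∀ k, ‖x k‖ ≤ M / c := by
    intro k
    by_cases h0 : x k = 0
    · rw [h0, norm_zero]; positivity
    obtain ⟨i, hi⟩ := hcx (x k) h0
    have hge : (B i : ℝ) + u k * (C i : ℝ) ≤ A'.mulVec (x k) i := by
      by_cases hiI : i ∈ I
      · exact le_of_eq (hxI k i hiI).symm
      · exact le_of_lt (hxIc k i hiI)
    have := hlb k i
    have hnx : -M ≤ -c * ‖x k‖ := by linarith
    rw [le_div_iff₀ hc]
    nlinarith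
  -- compactness
  have hxmem : ∀ k, x k ∈ Metric.closedBall (0 : Fin n → ℝ) (M / c) := by
    intro k
    rw [Metric.mem_closedBall, dist_zero_right]
    exact hxbound k
  obtain ⟨x₀, -, φ, hφ, hxtend⟩ :=
    (isCompact_closedBall (0 : Fin n → ℝ) (M / c)).tendsto_subseq hxmem
  have huφ : Filter.Tendsto (fun k => u (φ k)) Filter.atTop (nhds ε₀) :=
    hutend.comp hφ.tendsto_atTop
  have hAx : ∀ i : Fin m, Filter.Tendsto (fun k => A'.mulVec (x (φ k)) i)
      Filter.atTop (nhds (A'.mulVec x₀ i)) := by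
    intro i
    exact ((cont_mulVec_aux A' i).tendsto x₀).comp hxtend
  have hrhs : ∀ i : Fin m, Filter.Tendsto (fun k => (B i : ℝ) + u (φ k) * (C i : ℝ))
      Filter.atTop (nhds ((B i : ℝ) + ε₀ * (C i : ℝ))) := by
    intro i
    exact Filter.Tendsto.const_add _ (huφ.mul_const _)
  refine ⟨x₀, fun i hiI => ?_, fun i hiI => ?_⟩
  · have h1 : Filter.Tendsto (fun k => (B i : ℝ) + u (φ k) * (C i : ℝ))
        Filter.atTop (nhds (A'.mulVec x₀ i)) :=
      (hAx i).congr (fun k => hxI (φ k) i hiI)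
    exact tendsto_nhds_unique h1 (hrhs i)
  · exact le_of_tendsto_of_tendsto' (hrhs i) (hAx i)
      (fun k => le_of_lt (hxIc (φ k) i hiI))
end

section
/- Suppose A, B, C are rational. If Ω¹_I(ℝ) is nonempty and its supremum ε₀ is finite, then ε₀ is a rational number. -/
namespace FMelim

structure Con (k : ℕ) where
  coef : Fin k → ℚ
  cst : ℚ
  str : Bool

noncomputable def ev {k : ℕ} (c : Con k) (y : Fin k → ℝ) : ℝ :=
  (∑ i, (c.coef i : ℝ) * y i) + (c.cst : ℝ)

def holds {k : ℕ} (c : Con k) (y : Fin k → ℝ) : Prop :=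
  if c.str then 0 < ev c y else 0 ≤ ev c y

def res {k : ℕ} (c : Con (k+1)) : Con k := ⟨fun i => c.coef i.castSucc, c.cst, c.str⟩
def lc {k : ℕ} (c : Con (k+1)) : ℚ := c.coef (Fin.last k)
def comb {k : ℕ} (p q : Con (k+1)) : Con k :=
  ⟨fun i => (-(lc q)) * p.coef i.castSucc + (lc p) * q.coef i.castSucc,
   (-(lc q)) * p.cst + (lc p) * q.cst, p.str || q.str⟩
def elim {k : ℕ} (L : List (Con (k+1))) : List (Con k) :=
  (L.filter (fun c => lc c = 0)).map res ++
  (L.filter (fun c => 0 < lc c)).flatMap (fun p =>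
    (L.filter (fun c => lc c < 0)).map (fun q => comb p q))

lemma ev_snoc {k : ℕ} (c : Con (k+1)) (y : Fin k → ℝ) (t : ℝ) :
    ev c (Fin.snoc y t) = (lc c : ℝ) * t + ev (res c) y := by
  simp [ev, res, lc, Fin.sum_univ_castSucc]
  ring

lemma ev_comb {k : ℕ} (p q : Con (k+1)) (y : Fin k → ℝ) :
    ev (comb p q) y = (-(lc q) : ℝ) * ev (res p) y + (lc p : ℝ) * ev (res q) y := by
  have key : ∀ (a b : ℚ) (f g : Fin k → ℚ),
      (∑ i, ((a * f i + b * g i : ℚ) : ℝ) * y i)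
        = (a:ℝ) * ∑ i, (f i:ℝ) * y i + (b:ℝ) * ∑ i, (g i:ℝ) * y i := by
    intro a b f g
    rw [Finset.mul_sum, Finset.mul_sum, ← Finset.sum_add_distrib]
    refine Finset.sum_congr rfl fun i _ => ?_
    push_cast; ring
  simp only [ev, comb, res]
  rw [key]
  push_cast; ring

lemma div_le_div_neg_iff {ap aq ep eq : ℝ} (h1 : 0 < ap) (h2 : aq < 0) :
    -ep / ap ≤ -eq / aq ↔ 0 ≤ -aq * ep + ap * eq := by
  have hq' : 0 < -aq := by linarith
  have h3 : -eq / aq = eq / (-aq) := by rw [div_neg, neg_div]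
  rw [h3, div_le_div_iff₀ h1 hq']
  constructor <;> intro h <;> nlinarith

lemma div_lt_div_neg_iff {ap aq ep eq : ℝ} (h1 : 0 < ap) (h2 : aq < 0) :
    -ep / ap < -eq / aq ↔ 0 < -aq * ep + ap * eq := by
  have hq' : 0 < -aq := by linarith
  have h3 : -eq / aq = eq / (-aq) := by rw [div_neg, neg_div]
  rw [h3, div_lt_div_iff₀ h1 hq']
  constructor <;> intro h <;> nlinarith

/-- Given finitely many lower bounds `P` and upper bounds `N` (with strictness flags),
pairwise compatible, there is a real number between them. -/
lemma pick (P N : List (ℝ × Bool))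
    (h : ∀ p ∈ P, ∀ q ∈ N, if p.2 || q.2 then p.1 < q.1 else p.1 ≤ q.1) :
    ∃ t : ℝ, (∀ p ∈ P, if p.2 then p.1 < t else p.1 ≤ t) ∧
      (∀ q ∈ N, if q.2 then t < q.1 else t ≤ q.1) := by
  by_cases hP : P = []
  · by_cases hN : N = []
    · exact ⟨0, by simp [hP], by simp [hN]⟩
    · obtain ⟨q', hq'⟩ := List.exists_mem_of_ne_nil N hN
      set s : Finset ℝ := (N.map Prod.fst).toFinset with hs
      have hsne : s.Nonempty := ⟨q'.1, List.mem_toFinset.mpr (List.mem_map_of_mem hq')⟩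
      refine ⟨s.min' hsne - 1, by simp [hP], fun q hq => ?_⟩
      have : s.min' hsne ≤ q.1 := Finset.min'_le _ _ (List.mem_toFinset.mpr (List.mem_map_of_mem hq))
      split_ifs <;> linarith
  · obtain ⟨p', hp'⟩ := List.exists_mem_of_ne_nil P hP
    set sP : Finset ℝ := (P.map Prod.fst).toFinset with hsP
    have hPne : sP.Nonempty := ⟨p'.1, List.mem_toFinset.mpr (List.mem_map_of_mem hp')⟩
    set L := sP.max' hPne with hL
    have hLle : ∀ p ∈ P, p.1 ≤ L :=
      fun p hp => Finset.le_max' _ _ (List.mem_toFinset.mpr (List.mem_map_of_mem hp))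
    obtain ⟨p₀, hp₀, hp₀L⟩ : ∃ p₀ ∈ P, p₀.1 = L := by
      have hmem := Finset.max'_mem sP hPne
      obtain ⟨p₀, h1, h2⟩ := List.mem_map.mp (List.mem_toFinset.mp hmem)
      exact ⟨p₀, h1, h2⟩
    by_cases hN : N = []
    · refine ⟨L + 1, fun p hp => ?_, by simp [hN]⟩
      have := hLle p hp
      split_ifs <;> linarith
    · obtain ⟨q', hq'⟩ := List.exists_mem_of_ne_nil N hN
      set sN : Finset ℝ := (N.map Prod.fst).toFinset with hsN
      have hNne : sN.Nonempty := ⟨q'.1, List.mem_toFinset.mpr (List.mem_map_of_mem hq')⟩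
      set U := sN.min' hNne with hU
      have hUle : ∀ q ∈ N, U ≤ q.1 :=
        fun q hq => Finset.min'_le _ _ (List.mem_toFinset.mpr (List.mem_map_of_mem hq))
      obtain ⟨q₀, hq₀, hq₀U⟩ : ∃ q₀ ∈ N, q₀.1 = U := by
        have hmem := Finset.min'_mem sN hNne
        obtain ⟨q₀, h1, h2⟩ := List.mem_map.mp (List.mem_toFinset.mp hmem)
        exact ⟨q₀, h1, h2⟩
      have hLU : L ≤ U := by
        have := h p₀ hp₀ q₀ hq₀
        rw [hp₀L, hq₀U] at this
        split_ifs at this <;> linarith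
      rcases lt_or_eq_of_le hLU with hlt | heq
      · refine ⟨(L + U) / 2, fun p hp => ?_, fun q hq => ?_⟩
        · have := hLle p hp; split_ifs <;> linarith
        · have := hUle q hq; split_ifs <;> linarith
      · refine ⟨L, fun p hp => ?_, fun q hq => ?_⟩
        · have h1 := hLle p hp
          split_ifs with hps
          · have h2 := h p hp q₀ hq₀
            simp only [hps, Bool.true_or, if_true] at h2
            linarith [hq₀U, heq]
          · exact h1
        · have h1 := hUle q hq
          split_ifs with hqs
          · have h2 := h p₀ hp₀ q hq
            simp only [hqs, Bool.or_true, if_true] at h2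
            linarith [hp₀L, heq]
          · linarith

lemma elim_iff {k : ℕ} (L : List (Con (k+1))) (y : Fin k → ℝ) :
    (∀ c ∈ elim L, holds c y) ↔ ∃ t : ℝ, ∀ c ∈ L, holds c (Fin.snoc y t) := by
  constructor
  · intro H
    obtain ⟨t, htP, htN⟩ := pick
      ((L.filter (fun c => 0 < lc c)).map
        (fun p => (-(ev (res p) y) / (lc p : ℝ), p.str)))
      ((L.filter (fun c => lc c < 0)).map
        (fun q => (-(ev (res q) y) / (lc q : ℝ), q.str)))
      (by
        intro pb hpb qb hqb
        obtain ⟨p, hp, rfl⟩ := List.mem_map.mp hpb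
        obtain ⟨q, hq, rfl⟩ := List.mem_map.mp hqb
        obtain ⟨hpL, hpa⟩ := List.mem_filter.mp hp
        obtain ⟨hqL, hqa⟩ := List.mem_filter.mp hq
        have hpa' : 0 < lc p := of_decide_eq_true hpa
        have hqa' : lc q < 0 := of_decide_eq_true hqa
        have hpa'' : (0:ℝ) < (lc p : ℝ) := by exact_mod_cast hpa'
        have hqa'' : ((lc q : ℝ)) < 0 := by exact_mod_cast hqa'
        have hcomb : holds (comb p q) y := by
          refine H _ (List.mem_append.mpr (Or.inr ?_))
          refine List.mem_flatMap.mpr ⟨p, hp, List.mem_map_of_mem hq⟩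
        unfold holds at hcomb
        rw [ev_comb] at hcomb
        simp only [comb] at hcomb
        by_cases hs : (p.str || q.str) = true
        · simp only [hs, if_true] at hcomb
          simp only [hs, if_true]
          exact (div_lt_div_neg_iff hpa'' hqa'').mpr hcomb
        · simp only [hs, if_false, Bool.false_eq_true] at hcomb
          simp only [Bool.not_eq_true] at hs
          simp only [hs]
          simp only [Bool.false_eq_true, if_false]
          exact (div_le_div_neg_iff hpa'' hqa'').mpr hcomb)
    refine ⟨t, fun c hc => ?_⟩
    rcases lt_trichotomy (lc c) 0 with hneg | hzero | hpos
    · have hmem : c ∈ L.filter (fun c => lc c < 0) :=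
        List.mem_filter.mpr ⟨hc, decide_eq_true hneg⟩
      have := htN _ (List.mem_map_of_mem hmem)
      have hb : ((lc c : ℝ)) < 0 := by exact_mod_cast hneg
      unfold holds
      rw [ev_snoc]
      split_ifs with hcs
      · simp only [hcs, if_true] at this
        have := (lt_div_iff_of_neg hb).mp this
        linarith
      · simp only [hcs, if_false] at this
        have := (le_div_iff_of_neg hb).mp this
        linarith
    · have hmem : c ∈ L.filter (fun c => lc c = 0) :=
        List.mem_filter.mpr ⟨hc, decide_eq_true hzero⟩
      have hres := H _ (List.mem_append.mpr (Or.inl (List.mem_map_of_mem hmem)))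
      unfold holds at hres ⊢
      rw [ev_snoc, hzero]
      rw [show (res c).str = c.str from rfl] at hres
      simpa [res] using hres
    · have hmem : c ∈ L.filter (fun c => 0 < lc c) :=
        List.mem_filter.mpr ⟨hc, decide_eq_true hpos⟩
      have := htP _ (List.mem_map_of_mem hmem)
      have ha : (0:ℝ) < ((lc c : ℝ)) := by exact_mod_cast hpos
      unfold holds
      rw [ev_snoc]
      split_ifs with hcs
      · simp only [hcs, if_true] at this
        have := (div_lt_iff₀ ha).mp this
        linarith
      · simp only [hcs, if_false] at this
        have := (div_le_iff₀ ha).mp this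
        linarith
  · rintro ⟨t, ht⟩ c hc
    rcases List.mem_append.mp hc with h1 | h2
    · obtain ⟨c', hc', rfl⟩ := List.mem_map.mp h1
      obtain ⟨hcL, hc0⟩ := List.mem_filter.mp hc'
      have hc0' : lc c' = 0 := of_decide_eq_true hc0
      have := ht c' hcL
      unfold holds at this ⊢
      rw [ev_snoc, hc0'] at this
      rw [show (res c').str = c'.str from rfl]
      simpa [res] using this
    · obtain ⟨p, hp, hq⟩ := List.mem_flatMap.mp h2
      obtain ⟨q, hq', rfl⟩ := List.mem_map.mp hq
      obtain ⟨hpL, hpa⟩ := List.mem_filter.mp hp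
      obtain ⟨hqL, hqa⟩ := List.mem_filter.mp hq'
      have hpa' : (0:ℝ) < (lc p : ℝ) := by exact_mod_cast of_decide_eq_true hpa
      have hqa' : ((lc q : ℝ)) < 0 := by exact_mod_cast of_decide_eq_true hqa
      have hP := ht p hpL
      have hQ := ht q hqL
      unfold holds at hP hQ ⊢
      rw [ev_snoc] at hP hQ
      rw [ev_comb]
      simp only [comb]
      have hkey : (0:ℝ) ≤ -(lc q : ℝ) * ev (res p) y + (lc p : ℝ) * ev (res q) y := by
        split_ifs at hP hQ <;> nlinarith
      by_cases hs : (p.str || q.str) = true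
      · simp only [hs, if_true]
        rcases Bool.or_eq_true_iff.mp hs with hsp | hsq
        · rw [if_pos hsp] at hP
          split_ifs at hQ <;> nlinarith
        · rw [if_pos hsq] at hQ
          split_ifs at hP <;> nlinarith
      · simp only [hs, if_false, Bool.false_eq_true]
        exact hkey

def elimAll : (k : ℕ) → List (Con (1+k)) → List (Con 1)
  | 0, L => L
  | k+1, L => elimAll k (elim L)

lemma mainElim : ∀ (k : ℕ) (L : List (Con (1+k))) (z : Fin 1 → ℝ),
    (∀ c ∈ elimAll k L, holds c z) ↔
      ∃ x : Fin k → ℝ, ∀ c ∈ L, holds c (Fin.append z x) := by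
  intro k
  induction k with
  | zero =>
    intro L z
    have hz : ∀ x : Fin 0 → ℝ, Fin.append z x = z := by
      intro x
      haveI hss : Subsingleton (Fin (1+0)) := ⟨fun a b => Fin.ext (by omega)⟩
      funext i
      rw [Subsingleton.elim i (Fin.castAdd 0 (0 : Fin 1)), Fin.append_left]
      congr 1
    constructor
    · intro H
      exact ⟨Fin.elim0, fun c hc => by rw [hz]; exact H c hc⟩
    · rintro ⟨x, hx⟩ c hc
      have := hx c hc
      rwa [hz x] at this
  | succ k ih =>
    intro L z
    show (∀ c ∈ elimAll k (elim L), holds c z) ↔ _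
    rw [ih (elim L) z]
    constructor
    · rintro ⟨x, hx⟩
      obtain ⟨t, ht⟩ := (elim_iff L (Fin.append z x)).mp hx
      exact ⟨Fin.snoc x t, fun c hc => by rw [Fin.append_snoc]; exact ht c hc⟩
    · rintro ⟨x, hx⟩
      refine ⟨Fin.init x, (elim_iff L _).mpr ⟨x (Fin.last k), fun c hc => ?_⟩⟩
      have heq : Fin.snoc (Fin.append z (Fin.init x)) (x (Fin.last k)) = Fin.append z x := by
        rw [← Fin.append_snoc, Fin.snoc_init_self]
      rw [heq]
      exact hx c hc

section Translate

variable {m n : ℕ} (A : Matrix (Fin m) (Fin n) ℚ) (B C : Fin m → ℚ)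

def conPos (i : Fin m) (s : Bool) : Con (1+n) :=
  ⟨Fin.append ![-(C i)] (fun j => A i j), -(B i), s⟩

def conNeg (i : Fin m) : Con (1+n) :=
  ⟨Fin.append ![C i] (fun j => -(A i j)), B i, false⟩

@[simp] lemma conPos_str (i : Fin m) (s : Bool) : (conPos A B C i s).str = s := rfl
@[simp] lemma conNeg_str (i : Fin m) : (conNeg A B C i).str = false := rfl

noncomputable def L0 (I : Finset (Fin m)) : List (Con (1+n)) :=
  (I.toList.flatMap fun i => [conPos A B C i false, conNeg A B C i]) ++
  ((Finset.univ \ I).toList.map fun i => conPos A B C i true)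

lemma ev_conPos (i : Fin m) (s : Bool) (z : Fin 1 → ℝ) (x : Fin n → ℝ) :
    ev (conPos A B C i s) (Fin.append z x)
      = (∑ j, (A i j : ℝ) * x j) - (C i : ℝ) * z 0 - (B i : ℝ) := by
  simp [ev, conPos, Fin.sum_univ_add, Fin.append_left, Fin.append_right, Fin.sum_univ_one]
  push_cast
  ring

lemma ev_conNeg (i : Fin m) (z : Fin 1 → ℝ) (x : Fin n → ℝ) :
    ev (conNeg A B C i) (Fin.append z x)
      = -((∑ j, (A i j : ℝ) * x j) - (C i : ℝ) * z 0 - (B i : ℝ)) := by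
  simp [ev, conNeg, Fin.sum_univ_add, Fin.append_left, Fin.append_right, Fin.sum_univ_one,
    Finset.sum_neg_distrib]
  push_cast
  ring

lemma mulVec_eq (x : Fin n → ℝ) (i : Fin m) :
    (A.map (Rat.cast : ℚ → ℝ)).mulVec x i = ∑ j, (A i j : ℝ) * x j := by
  simp [Matrix.mulVec, dotProduct, Matrix.map_apply]

lemma omega_iff (I : Finset (Fin m)) (ε : ℝ) :
    ε ∈ Omega1R A B C I ↔
      ∃ x : Fin n → ℝ, ∀ c ∈ L0 A B C I, holds c (Fin.append ![ε] x) := by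
  constructor
  · rintro ⟨x, hx1, hx2⟩
    refine ⟨x, fun c hc => ?_⟩
    rcases List.mem_append.mp hc with h1 | h2
    · obtain ⟨i, hi, hci⟩ := List.mem_flatMap.mp h1
      have hiI : i ∈ I := Finset.mem_toList.mp hi
      have heq := hx1 i hiI
      rw [mulVec_eq] at heq
      simp only [List.mem_cons, List.mem_singleton] at hci
      rcases hci with rfl | rfl | h
      · unfold holds
        rw [ev_conPos, if_neg (by simp)]
        simp only [Matrix.cons_val_zero]
        linarith
      · unfold holds
        rw [ev_conNeg, if_neg (by simp)]
        simp only [Matrix.cons_val_zero]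
        linarith
      · exact absurd h (List.not_mem_nil)
    · obtain ⟨i, hi, rfl⟩ := List.mem_map.mp h2
      have hiI : i ∉ I := by
        have := Finset.mem_toList.mp hi
        simpa using (Finset.mem_sdiff.mp this).2
      have hlt := hx2 i hiI
      rw [mulVec_eq] at hlt
      unfold holds
      rw [ev_conPos, if_pos (by simp)]
      simp only [Matrix.cons_val_zero]
      linarith
  · rintro ⟨x, hx⟩
    refine ⟨x, fun i hi => ?_, fun i hi => ?_⟩
    · have h1 := hx (conPos A B C i false) (by
        refine List.mem_append.mpr (Or.inl ?_)
        exact List.mem_flatMap.mpr ⟨i, Finset.mem_toList.mpr hi, by simp⟩)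
      have h2 := hx (conNeg A B C i) (by
        refine List.mem_append.mpr (Or.inl ?_)
        exact List.mem_flatMap.mpr ⟨i, Finset.mem_toList.mpr hi, by simp⟩)
      unfold holds at h1 h2
      rw [ev_conPos] at h1
      rw [ev_conNeg] at h2
      simp only [conPos_str, conNeg_str, Bool.false_eq_true, if_false,
        Matrix.cons_val_zero] at h1 h2
      rw [mulVec_eq]
      linarith
    · have h1 := hx (conPos A B C i true) (by
        refine List.mem_append.mpr (Or.inr ?_)
        refine List.mem_map.mpr ⟨i, Finset.mem_toList.mpr (by simpa using hi), rfl⟩)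
      unfold holds at h1
      rw [ev_conPos] at h1
      simp only [conPos_str, if_true, Matrix.cons_val_zero] at h1
      rw [mulVec_eq]
      linarith

end Translate

lemma ev_one (c : Con 1) (ε : ℝ) : ev c ![ε] = (c.coef 0 : ℝ) * ε + (c.cst : ℝ) := by
  simp [ev, Fin.sum_univ_one]

/-- Endgame: the LUB of the solution set of finitely many one-variable rational
constraints is rational. -/
lemma final (L1 : List (Con 1)) (ε₀ : ℝ)
    (hne : {ε : ℝ | ∀ c ∈ L1, holds c ![ε]}.Nonempty)
    (hsup : IsLUB {ε : ℝ | ∀ c ∈ L1, holds c ![ε]} ε₀) :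
    ∃ q : ℚ, ε₀ = (q : ℝ) := by
  set S := {ε : ℝ | ∀ c ∈ L1, holds c ![ε]} with hS
  obtain ⟨s, hs⟩ := hne
  have hsε : s ≤ ε₀ := hsup.1 hs
  set U := L1.filter (fun c => c.coef 0 < 0) with hUdef
  have hU : U ≠ [] := by
    intro hU0
    have hmem : ∀ k : ℝ, 0 ≤ k → (s + k) ∈ S := by
      intro k hk c hc
      have hnotneg : ¬ (c.coef 0 < 0) := by
        intro hneg
        have : c ∈ U := List.mem_filter.mpr ⟨hc, decide_eq_true hneg⟩
        rw [hU0] at this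
        exact absurd this (List.not_mem_nil)
      have ha : (0:ℝ) ≤ (c.coef 0 : ℝ) := by exact_mod_cast not_lt.mp hnotneg
      have h1 := hs c hc
      unfold holds at h1 ⊢
      rw [ev_one] at h1 ⊢
      split_ifs at h1 ⊢ with h
      · nlinarith [mul_nonneg ha hk]
      · nlinarith [mul_nonneg ha hk]
    have h2 := hsup.1 (hmem (ε₀ - s + 1) (by linarith))
    linarith
  set F : Finset ℚ := (U.map (fun c => -(c.cst) / c.coef 0)).toFinset with hF
  have hFne : F.Nonempty := by
    obtain ⟨c, hc⟩ := List.exists_mem_of_ne_nil U hU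
    exact ⟨_, List.mem_toFinset.mpr (List.mem_map_of_mem hc)⟩
  set r := F.min' hFne with hr
  have claim1 : ∀ ε ∈ S, ε ≤ (r : ℝ) := by
    intro ε hε
    obtain ⟨c₀, hc₀U, hc₀r⟩ : ∃ c₀ ∈ U, -(c₀.cst) / c₀.coef 0 = r := by
      have hmem := Finset.min'_mem F hFne
      obtain ⟨c₀, h1, h2⟩ := List.mem_map.mp (List.mem_toFinset.mp hmem)
      exact ⟨c₀, h1, h2⟩
    obtain ⟨hc₀L, hc₀a⟩ := List.mem_filter.mp hc₀U
    have ha : (c₀.coef 0 : ℝ) < 0 := by exact_mod_cast of_decide_eq_true hc₀a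
    have haq : c₀.coef 0 ≠ 0 := ne_of_lt (of_decide_eq_true hc₀a)
    have hrr : (r : ℝ) = -(c₀.cst : ℝ) / (c₀.coef 0 : ℝ) := by
      rw [← hc₀r]
      push_cast
      ring
    have h1 := hε c₀ hc₀L
    unfold holds at h1
    rw [ev_one] at h1
    rw [hrr]
    rw [le_div_iff_of_neg ha]
    split_ifs at h1 <;> nlinarith
  have claim2 : ∀ t : ℝ, s ≤ t → t < (r : ℝ) → t ∈ S := by
    intro t h1 h2 c hc
    rcases lt_or_ge (c.coef 0) 0 with hneg | hpos
    · have hcU : c ∈ U := List.mem_filter.mpr ⟨hc, decide_eq_true hneg⟩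
      have hrle : r ≤ -(c.cst) / c.coef 0 :=
        Finset.min'_le _ _ (List.mem_toFinset.mpr (List.mem_map_of_mem hcU))
      have ha : (c.coef 0 : ℝ) < 0 := by exact_mod_cast hneg
      have htlt : t < -(c.cst : ℝ) / (c.coef 0 : ℝ) := by
        have : ((-(c.cst) / c.coef 0 : ℚ) : ℝ) = -(c.cst : ℝ) / (c.coef 0 : ℝ) := by
          push_cast; ring
        calc t < (r : ℝ) := h2
          _ ≤ _ := by rw [← this]; exact_mod_cast hrle
      have := (lt_div_iff_of_neg ha).mp htlt
      unfold holds
      rw [ev_one]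
      split_ifs <;> nlinarith
    · have ha : (0:ℝ) ≤ (c.coef 0 : ℝ) := by exact_mod_cast hpos
      have hcs := hs c hc
      unfold holds at hcs ⊢
      rw [ev_one] at hcs ⊢
      split_ifs at hcs ⊢ with h
      · nlinarith [mul_nonneg ha (by linarith : (0:ℝ) ≤ t - s)]
      · nlinarith [mul_nonneg ha (by linarith : (0:ℝ) ≤ t - s)]
  have le1 : ε₀ ≤ (r : ℝ) := hsup.2 claim1
  have le2 : (r : ℝ) ≤ ε₀ := by
    by_contra hcon
    push_neg at hcon
    set t := max s ((ε₀ + r) / 2) with ht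
    have ht1 : s ≤ t := le_max_left _ _
    have ht2 : t < (r : ℝ) := max_lt (lt_of_le_of_lt hsε hcon) (by linarith)
    have ht3 : t ≤ ε₀ := hsup.1 (claim2 t ht1 ht2)
    have ht4 : (ε₀ + r) / 2 ≤ t := le_max_right _ _
    linarith
  exact ⟨r, le_antisymm le1 le2⟩

end FMelim

/-- For rational A, B, C (with Ax ≥ 0 having no nonzero real
solution), if Ω¹_I(ℝ) is nonempty with finite supremum ε₀, then ε₀ is rational. -/
theorem sup_of_Omega1R_is_rational
    (m n : ℕ) (A : Matrix (Fin m) (Fin n) ℚ) (B C : Fin m → ℚ)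
    (hA : ∀ x : Fin n → ℝ,
      (∀ i : Fin m, 0 ≤ (A.map (Rat.cast : ℚ → ℝ)).mulVec x i) → x = 0)
    (I : Finset (Fin m)) (ε₀ : ℝ)
    (hne : (Omega1R A B C I).Nonempty)
    (hsup : IsLUB (Omega1R A B C I) ε₀) :
    ∃ q : ℚ, ε₀ = (q : ℝ) := by
  have hset : Omega1R A B C I
      = {ε : ℝ | ∀ c ∈ FMelim.elimAll n (FMelim.L0 A B C I), FMelim.holds c ![ε]} := by
    ext ε
    rw [Set.mem_setOf_eq, FMelim.mainElim n (FMelim.L0 A B C I) ![ε]]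
    exact FMelim.omega_iff A B C I ε
  rw [hset] at hne hsup
  exact FMelim.final _ ε₀ hne hsup
end

section
/- If Ω¹_∅ is nonempty (i.e., the polytope has nonempty interior for some ε) then Ω¹_∅ is an open subset of ℚ; more generally, for I = ∅ or I = {i} a singleton with A_i ≠ 0, the set Ω¹_I is open (possibly empty). -/
/-- Ω¹_∅ is an open subset of ℚ (possibly empty); more generally,
for I = ∅ or I = {i} a singleton with nonzero row A_i, the set Ω¹_I is open. -/
theorem Omega1_open_for_empty_and_singletons
    (m n : ℕ) (A : Matrix (Fin m) (Fin n) ℚ) (B C : Fin m → ℚ)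
    (hA : ∀ x : Fin n → ℚ, (∀ i : Fin m, 0 ≤ A.mulVec x i) → x = 0) :
    IsOpen (Omega1 A B C (∅ : Finset (Fin m))) ∧
    ∀ i : Fin m, A i ≠ 0 → IsOpen (Omega1 A B C {i}) := by
  constructor
  · rw [isOpen_iff_mem_nhds]
    rintro ε₀ ⟨x, -, hx⟩
    have h : ∀ i : Fin m, {ε : ℚ | B i + ε * C i < A.mulVec x i} ∈ nhds ε₀ := by
      intro i
      exact (isOpen_lt (by fun_prop) continuous_const).mem_nhds
        (hx i (Finset.notMem_empty i))
    have h2 : (⋂ i : Fin m, {ε : ℚ | B i + ε * C i < A.mulVec x i}) ∈ nhds ε₀ :=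
      Filter.iInter_mem.mpr h
    filter_upwards [h2] with ε hε
    exact ⟨x, fun i hi => absurd hi (Finset.notMem_empty i),
      fun i _ => Set.mem_iInter.mp hε i⟩
  · intro i hAi
    rw [isOpen_iff_mem_nhds]
    rintro ε₀ ⟨x, hxe, hx⟩
    have hxe' : A.mulVec x i = B i + ε₀ * C i := hxe i (Finset.mem_singleton_self i)
    set s : ℚ := ∑ k, (A i k)^2 with hs
    have hspos : 0 < s := by
      apply Finset.sum_pos' (fun k _ => sq_nonneg _)
      obtain ⟨k, hk⟩ := Function.ne_iff.mp hAi
      exact ⟨k, Finset.mem_univ k, by exact pow_pos (abs_pos.mpr hk) 2 |>.trans_eq (sq_abs _)⟩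
    set y : Fin n → ℚ := fun k => A i k / s with hy_def
    have hy : A.mulVec y i = 1 := by
      simp only [Matrix.mulVec, dotProduct, hy_def, div_eq_mul_inv, ← mul_assoc]
      rw [← Finset.sum_mul]
      have : ∑ k, A i k * A i k = s := by rw [hs]; congr 1; ext k; ring
      rw [this, mul_inv_cancel₀ hspos.ne']
    have key : ∀ ε : ℚ, A.mulVec (x + ((ε - ε₀) * C i) • y) i = B i + ε * C i := by
      intro ε
      rw [Matrix.mulVec_add, Matrix.mulVec_smul]
      simp only [Pi.add_apply, Pi.smul_apply, smul_eq_mul, hxe', hy]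
      ring
    have key2 : ∀ (ε : ℚ) (j : Fin m),
        A.mulVec (x + ((ε - ε₀) * C i) • y) j
          = A.mulVec x j + ((ε - ε₀) * C i) * A.mulVec y j := by
      intro ε j
      rw [Matrix.mulVec_add, Matrix.mulVec_smul]
      simp
    have h : ∀ j : {j : Fin m // j ≠ i},
        {ε : ℚ | B j.1 + ε * C j.1
          < A.mulVec x j.1 + ((ε - ε₀) * C i) * A.mulVec y j.1} ∈ nhds ε₀ := by
      rintro ⟨j, hj⟩
      apply (isOpen_lt (by fun_prop) (by fun_prop)).mem_nhds
      have := hx j (by simpa using hj)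
      simpa using this
    have h2 := Filter.iInter_mem.mpr h
    filter_upwards [h2] with ε hε
    refine ⟨x + ((ε - ε₀) * C i) • y, ?_, ?_⟩
    · intro j hj
      rw [Finset.mem_singleton] at hj
      subst hj
      exact key ε
    · intro j hj
      rw [Finset.mem_singleton] at hj
      rw [key2 ε j]
      exact Set.mem_iInter.mp hε ⟨j, hj⟩
end

section
/- If Ω¹_I is empty but Ω⁰_I is nonempty, then there exists a subset J of I₀ strictly containing I such that Ω⁰_I = Ω⁰_J and Ω¹_J is nonempty. -/
/-- If Ω¹_I is empty but Ω⁰_I is nonempty, then there exists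
J ⊋ I with Ω⁰_I = Ω⁰_J and Ω¹_J nonempty. -/
theorem Omega0_eq_Omega0_of_larger_index_set
    (m n : ℕ) (A : Matrix (Fin m) (Fin n) ℚ) (B C : Fin m → ℚ)
    (hA : ∀ x : Fin n → ℚ, (∀ i : Fin m, 0 ≤ A.mulVec x i) → x = 0)
    (I : Finset (Fin m))
    (h1 : Omega1 A B C I = ∅) (h0 : (Omega0 A B C I).Nonempty) :
    ∃ J : Finset (Fin m), I ⊂ J ∧ Omega0 A B C I = Omega0 A B C J ∧
      (Omega1 A B C J).Nonempty := by
  classical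
  obtain ⟨ε₀, x₀, hx₀⟩ := h0
  -- Q ε x : x is a witness that ε ∈ Ω⁰_I
  set Q : ℚ → (Fin n → ℚ) → Prop := fun ε x =>
    (∀ i ∈ I, A.mulVec x i = B i + ε * C i) ∧
    (∀ i ∉ I, B i + ε * C i ≤ A.mulVec x i) with hQdef
  set J : Finset (Fin m) := I ∪ Finset.univ.filter
    (fun i => ∀ ε x, Q ε x → A.mulVec x i = B i + ε * C i) with hJdef
  have hIJ : I ⊆ J := Finset.subset_union_left
  -- on J, every witness is tight
  have hJtight : ∀ j ∈ J, ∀ ε x, Q ε x → A.mulVec x j = B j + ε * C j := by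
    intro j hj ε x hq
    rcases Finset.mem_union.mp hj with hj | hj
    · exact hq.1 j hj
    · exact (Finset.mem_filter.mp hj).2 ε x hq
  -- choice of witnesses, strict at i for i ∉ J
  have hchoice : ∀ i : Fin m, ∃ p : ℚ × (Fin n → ℚ), Q p.1 p.2 ∧
      (i ∉ J → B i + p.1 * C i < A.mulVec p.2 i) := by
    intro i
    by_cases hi : i ∈ J
    · exact ⟨(ε₀, x₀), hx₀, fun h => absurd hi h⟩
    · have hiI : i ∉ I := fun h => hi (hIJ h)
      have hex : ¬ ∀ ε x, Q ε x → A.mulVec x i = B i + ε * C i := by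
        intro hall
        exact hi (Finset.mem_union.mpr (Or.inr (Finset.mem_filter.mpr ⟨Finset.mem_univ i, hall⟩)))
      push_neg at hex
      obtain ⟨ε, x, hq, hne⟩ := hex
      exact ⟨(ε, x), hq, fun _ => lt_of_le_of_ne (hq.2 i hiI) (Ne.symm hne)⟩
  choose p hp1 hp2 using hchoice
  set S : Finset (Fin m) := Finset.univ \ J with hSdef
  set c : ℚ := (S.card : ℚ) + 1 with hcdef
  have hc0 : (0:ℚ) < c := by
    have h := Nat.cast_nonneg (α := ℚ) S.card
    rw [hcdef]; linarith
  have hcne : c ≠ 0 := ne_of_gt hc0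
  set xb : Fin n → ℚ := c⁻¹ • (x₀ + ∑ i ∈ S, (p i).2) with hxbdef
  set εb : ℚ := c⁻¹ * (ε₀ + ∑ i ∈ S, (p i).1) with hεbdef
  -- linearity of mulVec
  have hmul : ∀ j, A.mulVec xb j
      = c⁻¹ * (A.mulVec x₀ j + ∑ i ∈ S, A.mulVec ((p i).2) j) := by
    intro j
    have h1 : A.mulVec xb = c⁻¹ • A.mulVec (x₀ + ∑ i ∈ S, (p i).2) := by
      rw [hxbdef, Matrix.mulVec_smul]
    have h2 : A.mulVec (x₀ + ∑ i ∈ S, (p i).2)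
        = A.mulVec x₀ + ∑ i ∈ S, A.mulVec ((p i).2) := by
      rw [Matrix.mulVec_add]
      congr 1
      induction S using Finset.induction_on with
      | empty => simp
      | insert _ _ h ih => rw [Finset.sum_insert h, Finset.sum_insert h, Matrix.mulVec_add, ih]
    rw [h1, h2]
    simp [Pi.smul_apply, smul_eq_mul, Finset.sum_apply, Pi.add_apply]
  -- the affine RHS
  have hrhs : ∀ j, B j + εb * C j
      = c⁻¹ * ((B j + ε₀ * C j) + ∑ i ∈ S, (B j + (p i).1 * C j)) := by
    intro j
    have hsum : ∑ i ∈ S, (B j + (p i).1 * C j)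
        = (S.card : ℚ) * B j + (∑ i ∈ S, (p i).1) * C j := by
      rw [Finset.sum_add_distrib, Finset.sum_const, nsmul_eq_mul, Finset.sum_mul]
    rw [hsum, hεbdef]
    field_simp [hcdef]
    ring
  -- εb ∈ Ω¹_J
  have hεb : εb ∈ Omega1 A B C J := by
    refine ⟨xb, ?_, ?_⟩
    · intro j hj
      rw [hmul j, hrhs j]
      congr 1
      congr 1
      · exact hJtight j hj ε₀ x₀ hx₀
      · exact Finset.sum_congr rfl fun i _ => hJtight j hj (p i).1 (p i).2 (hp1 i)
    · intro j hj
      have hjI : j ∉ I := fun h => hj (hIJ h)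
      have hjS : j ∈ S := Finset.mem_sdiff.mpr ⟨Finset.mem_univ j, hj⟩
      rw [hmul j, hrhs j]
      apply mul_lt_mul_of_pos_left _ (inv_pos.mpr hc0)
      apply add_lt_add_of_le_of_lt (hx₀.2 j hjI)
      exact Finset.sum_lt_sum (fun i _ => (hp1 i).2 j hjI)
        ⟨j, hjS, hp2 j (Finset.mem_sdiff.mp hjS).2⟩
  -- I ⊊ J
  have hne : I ≠ J := by
    intro h
    have : εb ∈ Omega1 A B C I := h ▸ hεb
    rw [h1] at this
    exact this
  refine ⟨J, lt_of_le_of_ne hIJ hne, ?_, ⟨εb, hεb⟩⟩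
  ext ε
  constructor
  · rintro ⟨x, hx⟩
    refine ⟨x, fun j hj => hJtight j hj ε x hx, fun j hj => ?_⟩
    exact hx.2 j (fun h => hj (hIJ h))
  · rintro ⟨x, hx⟩
    refine ⟨x, fun j hj => hx.1 j (hIJ hj), fun j hj => ?_⟩
    by_cases hjJ : j ∈ J
    · exact le_of_eq (hx.1 j hjJ).symm
    · exact hx.2 j hjJ
end

section
/- Suppose Ω⁰_I is a bounded segment [ε₁, ε₂] with ε₁ < ε₂ and equals the closure of Ω¹_I. Then there exist subsets J₁, J₂ of I₀ containing I such that Ω¹_{J₁} = {ε₁} and Ω¹_{J₂} = {ε₂}. -/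
lemma mulVec_combo {m n : ℕ} (A : Matrix (Fin m) (Fin n) ℚ) (x y : Fin n → ℚ)
    (a b : ℚ) (i : Fin m) :
    A.mulVec (fun j => a * x j + b * y j) i
      = a * A.mulVec x i + b * A.mulVec y i := by
  simp [Matrix.mulVec, dotProduct, mul_add, Finset.sum_add_distrib,
    Finset.mul_sum, mul_comm, mul_left_comm]

lemma lower_endpoint {m n : ℕ} (A : Matrix (Fin m) (Fin n) ℚ) (B C : Fin m → ℚ)
    (I : Finset (Fin m)) (ε₁ ε₂ : ℚ) (hle : ε₁ ≤ ε₂)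
    (h0 : Omega0 A B C I = Set.Icc ε₁ ε₂) :
    ∃ J : Finset (Fin m), I ⊆ J ∧ Omega1 A B C J = {ε₁} := by
  have hmem : ε₁ ∈ Omega0 A B C I := by
    rw [h0]; exact ⟨le_refl _, hle⟩
  obtain ⟨x, hxeq, hxge⟩ := hmem
  classical
  set J : Finset (Fin m) :=
    I ∪ Finset.univ.filter (fun i => A.mulVec x i = B i + ε₁ * C i) with hJ
  have hIJ : I ⊆ J := Finset.subset_union_left
  -- x satisfies equalities on J
  have hJeq : ∀ i ∈ J, A.mulVec x i = B i + ε₁ * C i := by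
    intro i hi
    rcases Finset.mem_union.mp hi with h | h
    · exact hxeq i h
    · exact (Finset.mem_filter.mp h).2
  have hJstrict : ∀ i ∉ J, B i + ε₁ * C i < A.mulVec x i := by
    intro i hi
    have h1 : i ∉ I := fun h => hi (hIJ h)
    have h2 : A.mulVec x i ≠ B i + ε₁ * C i := by
      intro h
      exact hi (Finset.mem_union_right _ (Finset.mem_filter.mpr ⟨Finset.mem_univ _, h⟩))
    exact lt_of_le_of_ne (hxge i h1) (Ne.symm h2)
  refine ⟨J, hIJ, ?_⟩
  apply Set.eq_singleton_iff_unique_mem.mpr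
  constructor
  · exact ⟨x, hJeq, hJstrict⟩
  · rintro ε ⟨y, hyeq, hygt⟩
    -- ε ∈ Omega0 I
    have hε0 : ε ∈ Omega0 A B C I := by
      refine ⟨y, fun i hi => hyeq i (hIJ hi), fun i hi => ?_⟩
      by_cases hiJ : i ∈ J
      · exact le_of_eq (hyeq i hiJ).symm
      · exact le_of_lt (hygt i hiJ)
    rw [h0] at hε0
    by_contra hne
    have hεgt : ε₁ < ε := lt_of_le_of_ne hε0.1 (Ne.symm hne)
    -- build a point strictly below ε₁
    set d : Fin m → ℚ := fun i => A.mulVec x i - (B i + ε₁ * C i) with hd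
    set e : Fin m → ℚ := fun i => A.mulVec y i - (B i + ε * C i) with he
    have hdpos : ∀ i ∉ J, 0 < d i := fun i hi => by
      simpa [hd, sub_pos] using hJstrict i hi
    have hepos : ∀ i ∉ J, 0 < e i := fun i hi => by
      simpa [he, sub_pos] using hygt i hi
    set S : Finset (Fin m) := Finset.univ.filter (fun i => i ∉ J) with hS
    set T : Finset ℚ := insert 1 (S.image (fun i => d i / e i)) with hT
    have hTne : T.Nonempty := ⟨1, Finset.mem_insert_self _ _⟩
    set t : ℚ := T.min' hTne with ht
    have htpos : 0 < t := by
      apply (Finset.lt_min'_iff T hTne).mpr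
      intro q hq
      rcases Finset.mem_insert.mp hq with rfl | hq
      · norm_num
      · obtain ⟨i, hi, rfl⟩ := Finset.mem_image.mp hq
        have hiJ : i ∉ J := (Finset.mem_filter.mp hi).2
        exact div_pos (hdpos i hiJ) (hepos i hiJ)
    have hte : ∀ i ∉ J, t * e i ≤ d i := by
      intro i hi
      have : t ≤ d i / e i := by
        apply Finset.min'_le
        exact Finset.mem_insert_of_mem (Finset.mem_image.mpr
          ⟨i, Finset.mem_filter.mpr ⟨Finset.mem_univ _, hi⟩, rfl⟩)
      calc t * e i ≤ (d i / e i) * e i := by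
            apply mul_le_mul_of_nonneg_right this (le_of_lt (hepos i hi))
        _ = d i := div_mul_cancel₀ _ (ne_of_gt (hepos i hi))
    set ε' : ℚ := ε₁ - t * (ε - ε₁) with hε'
    have hε'mem : ε' ∈ Omega0 A B C I := by
      refine ⟨fun j => (1 + t) * x j + (-t) * y j, ?_, ?_⟩
      · intro i hi
        rw [mulVec_combo, hxeq i hi, hyeq i (hIJ hi)]
        ring
      · intro i hi
        rw [mulVec_combo]
        by_cases hiJ : i ∈ J
        · rw [hJeq i hiJ, hyeq i hiJ, hε']; ring_nf; exact le_refl _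
        · have h1 := hte i hiJ
          have h2 := hdpos i hiJ
          have hx' := hJstrict i hiJ
          have hy' := hygt i hiJ
          have : A.mulVec x i = d i + (B i + ε₁ * C i) := by simp [hd]
          have hy2 : A.mulVec y i = e i + (B i + ε * C i) := by simp [he]
          rw [this, hy2, hε']
          nlinarith [mul_pos htpos h2, h1, htpos]
    rw [h0] at hε'mem
    have h3 : ε₁ ≤ ε' := hε'mem.1
    rw [hε'] at h3
    nlinarith [mul_pos htpos (sub_pos.mpr hεgt)]


lemma Omega0_neg {m n : ℕ} (A : Matrix (Fin m) (Fin n) ℚ) (B C : Fin m → ℚ)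
    (I : Finset (Fin m)) (ε : ℚ) :
    ε ∈ Omega0 A B C I ↔ -ε ∈ Omega0 A B (-C) I := by
  have key : ∀ i, B i + (-ε) * (-C) i = B i + ε * C i := fun i => by
    simp only [Pi.neg_apply]; ring
  unfold Omega0
  simp only [Set.mem_setOf_eq, key]

lemma Omega1_neg {m n : ℕ} (A : Matrix (Fin m) (Fin n) ℚ) (B C : Fin m → ℚ)
    (I : Finset (Fin m)) (ε : ℚ) :
    ε ∈ Omega1 A B C I ↔ -ε ∈ Omega1 A B (-C) I := by
  have key : ∀ i, B i + (-ε) * (-C) i = B i + ε * C i := fun i => by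
    simp only [Pi.neg_apply]; ring
  unfold Omega1
  simp only [Set.mem_setOf_eq, key]


/-- If Ω⁰_I is a bounded segment [ε₁, ε₂] with ε₁ < ε₂ and equals
the closure of Ω¹_I, then there exist J₁, J₂ ⊇ I with Ω¹_{J₁} = {ε₁} and
Ω¹_{J₂} = {ε₂}. -/
theorem extremities_are_singleton_Omega1
    (m n : ℕ) (A : Matrix (Fin m) (Fin n) ℚ) (B C : Fin m → ℚ)
    (hA : ∀ x : Fin n → ℚ, (∀ i : Fin m, 0 ≤ A.mulVec x i) → x = 0)
    (I : Finset (Fin m)) (ε₁ ε₂ : ℚ) (hlt : ε₁ < ε₂)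
    (h0 : Omega0 A B C I = Set.Icc ε₁ ε₂)
    (hcl : Omega0 A B C I = closure (Omega1 A B C I)) :
    ∃ J₁ J₂ : Finset (Fin m), I ⊆ J₁ ∧ I ⊆ J₂ ∧
      Omega1 A B C J₁ = {ε₁} ∧ Omega1 A B C J₂ = {ε₂} := by
  obtain ⟨J₁, hIJ₁, hJ₁⟩ := lower_endpoint A B C I ε₁ ε₂ hlt.le h0
  have h0' : Omega0 A B (-C) I = Set.Icc (-ε₂) (-ε₁) := by
    ext ε
    have h1 : ε ∈ Omega0 A B (-C) I ↔ -ε ∈ Omega0 A B C I := by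
      rw [Omega0_neg A B (-C) I ε, neg_neg]
    rw [h1, h0, Set.mem_Icc, Set.mem_Icc]
    constructor <;> rintro ⟨a, b⟩ <;> constructor <;> linarith
  obtain ⟨J₂, hIJ₂, hJ₂⟩ := lower_endpoint A B (-C) I (-ε₂) (-ε₁)
    (by linarith) h0'
  refine ⟨J₁, J₂, hIJ₁, hIJ₂, hJ₁, ?_⟩
  ext ε
  rw [Set.mem_singleton_iff, Omega1_neg A B C J₂ ε, hJ₂, Set.mem_singleton_iff]
  constructor <;> intro h <;> linarith
end

section
/- Suppose ε ∈ Ω^max_{K,I₀} := Ω¹_∅ ∩ ⋂_{i ∈ I₀\K} Ω¹_{{i}}. Then for any i ≠ j in I₀ \ K, there is no λ ∈ ℚ_{>0} with A_i = λA_j (the rows A_i and A_j are not positive multiples of each other). -/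
/-- Ω^max_{K,I₀} := Ω¹_∅ ∩ ⋂_{i ∈ I₀ \ K} Ω¹_{{i}}. -/
def OmegaMax {m n : ℕ} (A : Matrix (Fin m) (Fin n) ℚ) (B C : Fin m → ℚ)
    (K : Finset (Fin m)) : Set ℚ :=
  Omega1 A B C ∅ ∩ ⋂ (i : Fin m) (_ : i ∉ K), Omega1 A B C {i}

/-- If ε ∈ Ω^max_{K,I₀}, then for any i ≠ j in I₀ \ K, the rows
A_i and A_j are not positive rational multiples of each other. -/
theorem no_positively_proportional_rows
    (m n : ℕ) (A : Matrix (Fin m) (Fin n) ℚ) (B C : Fin m → ℚ)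
    (K : Finset (Fin m)) (hK0 : ∀ i : Fin m, A i = 0 → i ∈ K)
    (ε : ℚ) (hε : ε ∈ OmegaMax A B C K) :
    ∀ i j : Fin m, i ∉ K → j ∉ K → i ≠ j →
      ∀ lam : ℚ, 0 < lam → A i ≠ lam • A j := by
  intro i j hi hj hij lam hlam hAij
  obtain ⟨_, hInt⟩ := hε
  have hεi := Set.mem_iInter.1 (Set.mem_iInter.1 hInt i) hi
  have hεj := Set.mem_iInter.1 (Set.mem_iInter.1 hInt j) hj
  obtain ⟨x, hxe, hxs⟩ := hεi
  obtain ⟨y, hye, hys⟩ := hεj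
  have hxi : A.mulVec x i = B i + ε * C i := hxe i (Finset.mem_singleton_self i)
  have hyj : A.mulVec y j = B j + ε * C j := hye j (Finset.mem_singleton_self j)
  have hxj : B j + ε * C j < A.mulVec x j := hxs j (by simp [hij.symm])
  have hyi : B i + ε * C i < A.mulVec y i := hys i (by simp [hij])
  have hmx : A.mulVec x i = lam * A.mulVec x j := by
    simp only [Matrix.mulVec, dotProduct, hAij, Pi.smul_apply, smul_eq_mul,
      Finset.mul_sum, mul_assoc]
  have hmy : A.mulVec y i = lam * A.mulVec y j := by
    simp only [Matrix.mulVec, dotProduct, hAij, Pi.smul_apply, smul_eq_mul,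
      Finset.mul_sum, mul_assoc]
  have h1 : A.mulVec y i < A.mulVec x i := by
    rw [hmx, hmy, hyj]
    exact mul_lt_mul_of_pos_left hxj hlam
  rw [hxi] at h1
  exact absurd hyi (not_lt.2 h1.le)
end

section
/- In the setup of the one-parameter family Q^ε of moment polytopes obtained from an ample divisor D and the canonical divisor K_X of a ℚ-Gorenstein horospherical variety, the varieties X_{i,j} associated to the open equivalence classes ]α_{i,j}, α_{i,j+1}[ are ℚ-Gorenstein: for every vertex v of the pseudo-moment polytope Q̃^ε with ε in the open class, the linear system A_{I_v} x = C̃_{I_v} has a solution, where I_v is the maximal index set with v = F_{I_v}. -/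
/-- (ℚ-Gorenstein criterion along the one-parameter family of
pseudo-moment polytopes Q̃^ε = {x : Ax ≥ B̃ + εC̃}.) If for every ε in a
nonempty open interval ]a,b[ of equivalence the vertex face with index set I_v
is nonempty — in particular the linear system A_{I_v} x = B̃_{I_v} + εC̃_{I_v}
is solvable for every such ε — then the linear system A_{I_v} x = C̃_{I_v}
(criterion for K_X to be ℚ-Cartier at the corresponding orbit) has a solution.
Hence the varieties X_{i,j} attached to the open classes are ℚ-Gorenstein. -/
theorem QGorenstein_of_open_class
    (m n : ℕ) (A : Matrix (Fin m) (Fin n) ℚ) (Bt Ct : Fin m → ℚ)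
    (Iv : Finset (Fin m)) (a b : ℚ) (hab : a < b)
    (hsolv : ∀ ε ∈ Set.Ioo a b, ∃ x : Fin n → ℚ,
      ∀ i ∈ Iv, A.mulVec x i = Bt i + ε * Ct i) :
    ∃ x : Fin n → ℚ, ∀ i ∈ Iv, A.mulVec x i = Ct i := by
  set ε₁ : ℚ := (2*a + b)/3 with hε₁
  set ε₂ : ℚ := (a + 2*b)/3 with hε₂
  have h₁ : ε₁ ∈ Set.Ioo a b := by constructor <;> [skip; skip] <;> rw [hε₁] <;> linarith
  have h₂ : ε₂ ∈ Set.Ioo a b := by constructor <;> [skip; skip] <;> rw [hε₂] <;> linarith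
  obtain ⟨x₁, hx₁⟩ := hsolv ε₁ h₁
  obtain ⟨x₂, hx₂⟩ := hsolv ε₂ h₂
  have hne : ε₂ - ε₁ ≠ 0 := by
    have : ε₁ < ε₂ := by rw [hε₁, hε₂]; linarith
    linarith
  refine ⟨(ε₂ - ε₁)⁻¹ • (x₂ - x₁), fun i hi => ?_⟩
  rw [Matrix.mulVec_smul, Matrix.mulVec_sub]
  simp only [Pi.smul_apply, Pi.sub_apply, hx₁ i hi, hx₂ i hi, smul_eq_mul]
  field_simp
  ring
end

section
/- Let I ⊆ I₀ with Ω⁰_I = {ε₀} a single point, and suppose ε₀ ∈ Ω^max_{K,I₀} (so ε₀ lies in an open set where the polytope P^ε is full-dimensional and each constraint in I₀\K defines a facet). Then there exists I₁ ⊆ I₀ such that the upper extremity (supremum) of Ω⁰_{I₁} equals ε₀, and Ω⁰_{I₁} is not reduced to a point. -/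
open Matrix Finset
lemma exists_delta {m : ℕ} (s C : Fin m → ℚ) (hs : ∀ i, 0 < s i) :
    ∃ δ : ℚ, 0 < δ ∧ ∀ i, δ * |C i| < s i := by
  rcases isEmpty_or_nonempty (Fin m) with h | h
  · exact ⟨1, one_pos, fun i => (h.elim i)⟩
  · obtain ⟨i₀, -, hmin⟩ := Finset.exists_min_image Finset.univ
      (fun i => s i / (|C i| + 1)) ⟨h.some, Finset.mem_univ _⟩
    have hp : (0:ℚ) < s i₀ / (|C i₀| + 1) / 2 := by
      have := hs i₀; have : (0:ℚ) < |C i₀| + 1 := by positivity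
      positivity
    refine ⟨s i₀ / (|C i₀| + 1) / 2, hp, fun i => ?_⟩
    have h1 := hmin i (Finset.mem_univ i)
    have hC : (0:ℚ) ≤ |C i| := abs_nonneg _
    have hC0 : (0:ℚ) ≤ |C i₀| := abs_nonneg _
    have hsi := hs i
    have hsi0 := hs i₀
    have h2 : s i₀ / (|C i₀| + 1) / 2 * |C i| ≤ s i / (|C i| + 1) / 2 * |C i| := by
      apply mul_le_mul_of_nonneg_right _ hC
      linarith
    have h3 : s i / (|C i| + 1) / 2 * |C i| < s i := by
      rw [div_div, div_mul_eq_mul_div, div_lt_iff₀ (by positivity)]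
      nlinarith
    linarith

/-- helper: G ≤ c/(k+1) for unboundedly many k forces G ≤ 0 -/
lemma le_zero_of_le_div {S : Set ℕ} (hS : S.Infinite) (c G : ℚ)
    (h : ∀ k ∈ S, G ≤ c / ((k : ℚ) + 1)) : G ≤ 0 := by
  by_contra hG
  push_neg at hG
  obtain ⟨k, hkS, hk⟩ := hS.exists_gt ⌈c / G⌉₊
  have hk1 : (0:ℚ) < (k:ℚ) + 1 := by positivity
  have h2 := h k hkS
  rcases le_or_gt c 0 with hc | hc
  · have : c / ((k:ℚ)+1) ≤ 0 := div_nonpos_of_nonpos_of_nonneg hc hk1.le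
    linarith
  · have h3 : c / G ≤ (⌈c / G⌉₊ : ℚ) := Nat.le_ceil _
    have h4 : ((⌈c / G⌉₊ : ℕ) : ℚ) < (k : ℚ) := by exact_mod_cast hk
    have h5 : c / G < (k:ℚ) + 1 := by linarith
    have h6 : c < G * ((k:ℚ)+1) := by
      rw [div_lt_iff₀ hG] at h5; linarith
    have h7 : c / ((k:ℚ)+1) < G := by
      rw [div_lt_iff₀ hk1]; linarith [h6]
    linarith
noncomputable def tightKer {m n : ℕ} (A : Matrix (Fin m) (Fin n) ℚ) (b : Fin m → ℚ)
    (x : Fin n → ℚ) : Submodule ℚ (Fin n → ℚ) :=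
  ⨅ (i : Fin m) (_ : A.mulVec x i = b i),
    LinearMap.ker ((LinearMap.proj i : (Fin m → ℚ) →ₗ[ℚ] ℚ).comp A.mulVecLin)

lemma mem_tightKer {m n : ℕ} (A : Matrix (Fin m) (Fin n) ℚ) (b : Fin m → ℚ)
    (x d : Fin n → ℚ) :
    d ∈ tightKer A b x ↔ ∀ i, A.mulVec x i = b i → A.mulVec d i = 0 := by
  simp [tightKer, Submodule.mem_iInf, LinearMap.mem_ker, Matrix.mulVecLin_apply]

/-- vertex domination: from any feasible point we can reach a feasible point with
no worse objective whose tight rows pin down directions. -/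
lemma exists_vertex {m n : ℕ} (A : Matrix (Fin m) (Fin n) ℚ)
    (hA : ∀ x : Fin n → ℚ, (∀ i : Fin m, 0 ≤ A.mulVec x i) → x = 0)
    (φ : (Fin n → ℚ) →ₗ[ℚ] ℚ) (b : Fin m → ℚ) (x : Fin n → ℚ)
    (hx : ∀ i, b i ≤ A.mulVec x i) :
    ∃ x' : Fin n → ℚ, (∀ i, b i ≤ A.mulVec x' i) ∧ φ x' ≤ φ x ∧
      ∀ d : Fin n → ℚ, (∀ i, A.mulVec x' i = b i → A.mulVec d i = 0) → d = 0 := by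
  suffices h : ∀ r : ℕ, ∀ x : Fin n → ℚ, (∀ i, b i ≤ A.mulVec x i) →
      Module.finrank ℚ (tightKer A b x) = r →
      ∃ x', (∀ i, b i ≤ A.mulVec x' i) ∧ φ x' ≤ φ x ∧
        ∀ d : Fin n → ℚ, (∀ i, A.mulVec x' i = b i → A.mulVec d i = 0) → d = 0 by
    exact h _ x hx rfl
  intro r
  induction r using Nat.strong_induction_on with
  | _ r ih =>
    intro x hx hr
    by_cases hbot : tightKer A b x = ⊥
    · refine ⟨x, hx, le_rfl, fun d hd => ?_⟩
      have : d ∈ tightKer A b x := (mem_tightKer A b x d).mpr hd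
      rw [hbot] at this
      simpa using this
    · -- pick a nonzero direction in the kernel
      obtain ⟨d₀, hd₀mem, hd₀⟩ := Submodule.exists_mem_ne_zero_of_ne_bot hbot
      set d : Fin n → ℚ := if φ d₀ ≤ 0 then d₀ else -d₀ with hddef
      have hdmem : d ∈ tightKer A b x := by
        rw [hddef]; split
        · exact hd₀mem
        · exact Submodule.neg_mem _ hd₀mem
      have hdne : d ≠ 0 := by
        rw [hddef]; split
        · exact hd₀
        · simpa using hd₀
      have hφd : φ d ≤ 0 := by
        rw [hddef]; split
        · assumption
        · rw [map_neg]; push_neg at *; linarith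
      have hdK : ∀ i, A.mulVec x i = b i → A.mulVec d i = 0 :=
        (mem_tightKer A b x d).mp hdmem
      -- some row must block the direction d
      have hneg : ∃ i, A.mulVec d i < 0 := by
        by_contra hc
        push_neg at hc
        exact hdne (hA d hc)
      obtain ⟨i₁, hi₁⟩ := hneg
      -- find the blocking row
      set N : Finset (Fin m) := Finset.univ.filter (fun i => A.mulVec d i < 0) with hN
      have hNne : N.Nonempty := ⟨i₁, by simp [hN, hi₁]⟩
      obtain ⟨i₂, hi₂N, hi₂min⟩ := Finset.exists_min_image N
        (fun i => (A.mulVec x i - b i) / (-A.mulVec d i)) hNne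
      have hi₂neg : A.mulVec d i₂ < 0 := by
        simpa [hN] using hi₂N
      set t : ℚ := (A.mulVec x i₂ - b i₂) / (-A.mulVec d i₂) with ht
      have hi₂slack : b i₂ < A.mulVec x i₂ := by
        rcases lt_or_eq_of_le (hx i₂) with h | h
        · exact h
        · exact absurd (hdK i₂ h.symm) (by linarith)
      have htpos : 0 < t := by
        rw [ht]
        apply div_pos (by linarith) (by linarith)
      set x' : Fin n → ℚ := x + t • d with hx'
      have hmv : ∀ y : Fin n → ℚ, A.mulVec (x + t • y) = A.mulVec x + t • A.mulVec y := by
        intro y; rw [Matrix.mulVec_add, Matrix.mulVec_smul]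
      have hx'i : ∀ i, A.mulVec x' i = A.mulVec x i + t * A.mulVec d i := by
        intro i; rw [hx', hmv d]; simp [smul_eq_mul]
      -- feasibility of x'
      have hfeas' : ∀ i, b i ≤ A.mulVec x' i := by
        intro i
        rw [hx'i i]
        rcases le_or_gt 0 (A.mulVec d i) with h | h
        · nlinarith [hx i]
        · have hiN : i ∈ N := by simp [hN, h]
          have h1 := hi₂min i hiN
          have hpos : (0:ℚ) < -A.mulVec d i := by linarith
          have h2 : t * (-A.mulVec d i) ≤ A.mulVec x i - b i :=
            (le_div_iff₀ hpos).mp h1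
          have h6 : t * (-A.mulVec d i) = -(t * A.mulVec d i) := by ring
          linarith
      -- i₂ is tight at x'
      have hne : -A.mulVec d i₂ ≠ 0 := by linarith
      have hcancel : t * (-A.mulVec d i₂) = A.mulVec x i₂ - b i₂ := by
        rw [ht]; exact div_mul_cancel₀ _ hne
      have hi₂tight : A.mulVec x' i₂ = b i₂ := by
        have h5 : t * A.mulVec d i₂ = b i₂ - A.mulVec x i₂ := by
          linear_combination (-1 : ℚ) * hcancel
        rw [hx'i i₂, h5]; ring
      -- tight set grows
      have hker_le : tightKer A b x' ≤ tightKer A b x := by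
        intro e he
        rw [mem_tightKer] at he ⊢
        intro i hi
        apply he
        rw [hx'i i, hdK i hi, hi]
        ring
      have hker_lt : tightKer A b x' < tightKer A b x := by
        refine lt_of_le_of_ne hker_le (fun heq => ?_)
        rw [← heq] at hdmem
        have := (mem_tightKer A b x' d).mp hdmem i₂ hi₂tight
        linarith
      have hrank : Module.finrank ℚ (tightKer A b x') < r := by
        rw [← hr]
        exact Submodule.finrank_lt_finrank_of_lt hker_lt
      obtain ⟨x'', h1, h2, h3⟩ := ih _ hrank x' hfeas' rfl
      refine ⟨x'', h1, ?_, h3⟩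
      have : φ x' = φ x + t * φ d := by
        rw [hx', map_add, _root_.map_smul, smul_eq_mul]
      nlinarith

set_option maxHeartbeats 2000000 in
/-- (Lemma "pointtosegement".) If Ω⁰_I = {ε₀} and
ε₀ ∈ Ω^max_{K,I₀}, then there exists I₁ ⊆ I₀ whose set Ω⁰_{I₁} has supremum ε₀
and is not reduced to a point. -/
theorem point_to_segment
    (m n : ℕ) (A : Matrix (Fin m) (Fin n) ℚ) (B C : Fin m → ℚ)
    (hA : ∀ x : Fin n → ℚ, (∀ i : Fin m, 0 ≤ A.mulVec x i) → x = 0)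
    (K : Finset (Fin m)) (hK0 : ∀ i : Fin m, A i = 0 → i ∈ K)
    (I : Finset (Fin m)) (ε₀ : ℚ)
    (h0 : Omega0 A B C I = {ε₀}) (hmax : ε₀ ∈ OmegaMax A B C K) :
    ∃ I₁ : Finset (Fin m), IsLUB (Omega0 A B C I₁) ε₀ ∧
      ∃ η ∈ Omega0 A B C I₁, η ≠ ε₀ := by
    classical
  obtain ⟨hmax1, -⟩ := hmax
  obtain ⟨xs, -, hxs0⟩ := hmax1
  have hxs : ∀ i, B i + ε₀ * C i < A.mulVec xs i :=
    fun i => hxs0 i (Finset.notMem_empty i)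
  have hε₀I : ε₀ ∈ Omega0 A B C I := by rw [h0]; exact rfl
  obtain ⟨x₀, hx₀e, hx₀i⟩ := hε₀I
  have hx₀ : ∀ i, B i + ε₀ * C i ≤ A.mulVec x₀ i := by
    intro i
    by_cases hi : i ∈ I
    · exact (hx₀e i hi).ge
    · exact hx₀i i hi
  obtain ⟨δ, hδ, hδC⟩ := exists_delta (fun i => A.mulVec xs i - (B i + ε₀ * C i)) C
    (fun i => by have := hxs i; linarith)
  have hδC' : ∀ i, δ * |C i| < A.mulVec xs i - (B i + ε₀ * C i) := fun i => hδC i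
  -- the decreasing sequence of parameter values
  set lam : ℕ → ℚ := fun k => 1 / ((k : ℚ) + 1) with hlam
  set sk : ℕ → ℚ := fun k => ε₀ - δ * lam k with hsk
  clear_value lam sk
  have hkpos : ∀ k : ℕ, (0:ℚ) < (k:ℚ) + 1 := fun k => by positivity
  have hlampos : ∀ k : ℕ, 0 < lam k := fun k => by
    simp only [hlam]; positivity
  have hlamle : ∀ k : ℕ, lam k ≤ 1 := fun k => by
    simp only [hlam]
    rw [div_le_one (hkpos k)]
    linarith [Nat.cast_nonneg (α := ℚ) k]
  have hsklt : ∀ k, sk k < ε₀ := fun k => by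
    have h1 := hlampos k
    have h2 : 0 < δ * lam k := mul_pos hδ h1
    simp only [hsk]; linarith
  have hskdec : ∀ k₁ k₂ : ℕ, k₁ < k₂ → sk k₁ < sk k₂ := by
    intro k₁ k₂ hk
    have h1 : lam k₂ < lam k₁ := by
      simp only [hlam]
      apply one_div_lt_one_div_of_lt (hkpos k₁)
      have : (k₁:ℚ) < (k₂:ℚ) := by exact_mod_cast hk
      linarith
    have h2 := mul_lt_mul_of_pos_left h1 hδ
    simp only [hsk]
    linarith
  -- the objective functional
  set φ : (Fin n → ℚ) →ₗ[ℚ] ℚ :=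
    ∑ i ∈ I, (LinearMap.proj i).comp A.mulVecLin with hφ
  have hφx : ∀ x : Fin n → ℚ, φ x = ∑ i ∈ I, A.mulVec x i := by
    intro x
    rw [hφ]
    simp [LinearMap.sum_apply, Matrix.mulVecLin_apply]
  clear_value φ
  set c1 : ℚ := ∑ i ∈ I, (A.mulVec xs i - (B i + (ε₀ - δ) * C i)) with hc1
  -- feasible starting points with small objective
  have hyk : ∀ k : ℕ, ∃ y : Fin n → ℚ,
      (∀ i, B i + sk k * C i ≤ A.mulVec y i) ∧
      ∑ i ∈ I, (A.mulVec y i - (B i + sk k * C i)) = lam k * c1 := by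
    intro k
    refine ⟨x₀ + lam k • (xs - x₀), ?_, ?_⟩
    · intro i
      have hmv : A.mulVec (x₀ + lam k • (xs - x₀)) i
          = A.mulVec x₀ i + lam k * (A.mulVec xs i - A.mulVec x₀ i) := by
        rw [Matrix.mulVec_add, Matrix.mulVec_smul, Matrix.mulVec_sub]
        simp [smul_eq_mul]
      rw [hmv]
      have h1 := hx₀ i
      have h2 := hδC' i
      have h3 : δ * -|C i| ≤ δ * C i :=
        mul_le_mul_of_nonneg_left (neg_abs_le (C i)) hδ.le
      have h4 := hlampos k
      have h5 := hlamle k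
      have hsk' : sk k = ε₀ - δ * lam k := by simp only [hsk]
      rw [hsk']
      nlinarith [mul_nonneg (by linarith : (0:ℚ) ≤ 1 - lam k)
          (by linarith : 0 ≤ A.mulVec x₀ i - (B i + ε₀ * C i)),
        mul_pos h4 (by nlinarith : (0:ℚ) < A.mulVec xs i - (B i + ε₀ * C i) + δ * C i)]
    · rw [hc1, Finset.mul_sum]
      apply Finset.sum_congr rfl
      intro i hi
      have hmv : A.mulVec (x₀ + lam k • (xs - x₀)) i
          = A.mulVec x₀ i + lam k * (A.mulVec xs i - A.mulVec x₀ i) := by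
        rw [Matrix.mulVec_add, Matrix.mulVec_smul, Matrix.mulVec_sub]
        simp [smul_eq_mul]
      rw [hmv]
      have hi0 := hx₀e i hi
      have hsk' : sk k = ε₀ - δ * lam k := by simp only [hsk]
      rw [hsk']
      linear_combination (1 - lam k) * hi0
  -- vertex points
  have hex : ∀ k : ℕ, ∃ xk : Fin n → ℚ,
      (∀ i, B i + sk k * C i ≤ A.mulVec xk i) ∧
      (∑ i ∈ I, (A.mulVec xk i - (B i + sk k * C i)) ≤ lam k * c1) ∧
      (∀ d : Fin n → ℚ,
        (∀ i, A.mulVec xk i = B i + sk k * C i → A.mulVec d i = 0) → d = 0) := by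
    intro k
    obtain ⟨y, hyfeas, hyval⟩ := hyk k
    obtain ⟨xk, hfeas, hobj, hinj⟩ :=
      exists_vertex A hA φ (fun i => B i + sk k * C i) y hyfeas
    refine ⟨xk, hfeas, ?_, hinj⟩
    have e1 : ∑ i ∈ I, (A.mulVec xk i - (B i + sk k * C i))
        = φ xk - ∑ i ∈ I, (B i + sk k * C i) := by
      rw [hφx, Finset.sum_sub_distrib]
    have e2 : ∑ i ∈ I, (A.mulVec y i - (B i + sk k * C i))
        = φ y - ∑ i ∈ I, (B i + sk k * C i) := by
      rw [hφx, Finset.sum_sub_distrib]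
    rw [e1]
    rw [e2] at hyval
    linarith
  choose xv hfeas hcb hinj using hex
  -- the objective is positive at each vertex point
  have hcpos : ∀ k : ℕ, 0 < ∑ i ∈ I, (A.mulVec (xv k) i - (B i + sk k * C i)) := by
    intro k
    have hnn : ∀ i ∈ I, 0 ≤ A.mulVec (xv k) i - (B i + sk k * C i) :=
      fun i _ => by linarith [hfeas k i]
    rcases (Finset.sum_nonneg hnn).lt_or_eq with h | h
    · exact h
    · exfalso
      have hall := (Finset.sum_eq_zero_iff_of_nonneg hnn).mp h.symm
      have hmem : sk k ∈ Omega0 A B C I := by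
        refine ⟨xv k, fun i hi => ?_, fun i _ => hfeas k i⟩
        have := hall i hi
        linarith
      rw [h0] at hmem
      have : sk k = ε₀ := hmem
      linarith [hsklt k]
  -- pigeonhole on tight sets
  set Tf : ℕ → Finset (Fin m) :=
    fun k => Finset.univ.filter (fun i => A.mulVec (xv k) i = B i + sk k * C i) with hTf
  obtain ⟨T, hTinf⟩ := Finite.exists_infinite_fiber Tf
  set S : Set ℕ := Tf ⁻¹' {T} with hSdef
  have hS : S.Infinite := Set.infinite_coe_iff.mp hTinf
  have hSmem : ∀ k, k ∈ S ↔ Tf k = T := by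
    intro k; rw [hSdef]; simp
  clear_value S
  have hTmem : ∀ k, k ∈ S → ∀ i : Fin m,
      (i ∈ T ↔ A.mulVec (xv k) i = B i + sk k * C i) := by
    intro k hk i
    rw [← (hSmem k).mp hk, hTf]
    simp
  obtain ⟨k₀, hk₀⟩ := hS.nonempty
  -- the tight rows determine points uniquely
  set Mmap : (Fin n → ℚ) →ₗ[ℚ] ({ i // i ∈ T } → ℚ) :=
    (LinearMap.funLeft ℚ ℚ (fun i : { i // i ∈ T } => (i : Fin m))).comp A.mulVecLin
    with hMmap
  have hMx : ∀ (x : Fin n → ℚ) (i : { i // i ∈ T }),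
      Mmap x i = A.mulVec x (i : Fin m) := fun x i => rfl
  clear_value Mmap
  have hMker : LinearMap.ker Mmap = ⊥ := by
    rw [LinearMap.ker_eq_bot']
    intro d hd
    apply hinj k₀
    intro i hi
    have hiT : i ∈ T := (hTmem k₀ hk₀ i).mpr hi
    have := congrFun hd ⟨i, hiT⟩
    simpa [hMx] using this
  obtain ⟨g, hg⟩ := Mmap.exists_leftInverse_of_injective hMker
  have hginv : ∀ x : Fin n → ℚ, g (Mmap x) = x := by
    intro x
    have := DFunLike.congr_fun hg x
    simpa using this
  set p : Fin n → ℚ := g (fun i => B (i : Fin m)) with hp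
  set q : Fin n → ℚ := g (fun i => C (i : Fin m)) with hq
  clear_value p q
  have hrep : ∀ (x : Fin n → ℚ) (ε : ℚ),
      (∀ i ∈ T, A.mulVec x i = B i + ε * C i) → x = p + ε • q := by
    intro x ε hx
    have h1 : Mmap x = (fun i : { i // i ∈ T } => B (i : Fin m))
        + ε • (fun i : { i // i ∈ T } => C (i : Fin m)) := by
      funext i
      have := hx (i : Fin m) i.2
      simpa [hMx, smul_eq_mul] using this
    calc x = g (Mmap x) := (hginv x).symm
      _ = p + ε • q := by rw [h1, map_add, _root_.map_smul, hp, hq]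
  set u : Fin m → ℚ := fun i => A.mulVec p i - B i with hu
  set v : Fin m → ℚ := fun i => A.mulVec q i - C i with hv
  clear_value u v
  have hphi : ∀ (ε : ℚ) (i : Fin m),
      A.mulVec (p + ε • q) i = B i + ε * C i + (u i + ε * v i) := by
    intro ε i
    rw [Matrix.mulVec_add, Matrix.mulVec_smul]
    simp only [hu, hv, Pi.add_apply, Pi.smul_apply, smul_eq_mul]
    ring
  -- basic facts along S
  have hXrep : ∀ k ∈ S, xv k = p + sk k • q := by
    intro k hk
    exact hrep (xv k) (sk k) (fun i hi => (hTmem k hk i).mp hi)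
  have ha : ∀ k ∈ S, ∀ i ∈ T, u i + sk k * v i = 0 := by
    intro k hk i hi
    have h1 := (hTmem k hk i).mp hi
    rw [hXrep k hk, hphi] at h1
    linarith
  have hb : ∀ k ∈ S, ∀ i : Fin m, 0 ≤ u i + sk k * v i := by
    intro k hk i
    have h1 := hfeas k i
    rw [hXrep k hk, hphi] at h1
    linarith
  have hc : ∀ k ∈ S, 0 < ∑ i ∈ I, (u i + sk k * v i) ∧
      ∑ i ∈ I, (u i + sk k * v i) ≤ lam k * c1 := by
    intro k hk
    have e1 : ∑ i ∈ I, (A.mulVec (xv k) i - (B i + sk k * C i))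
        = ∑ i ∈ I, (u i + sk k * v i) := by
      apply Finset.sum_congr rfl
      intro i _
      rw [hXrep k hk, hphi]
      ring
    constructor
    · rw [← e1]; exact hcpos k
    · rw [← e1]; exact hcb k
  -- rows of T vanish identically
  obtain ⟨k₁, hk₁⟩ := hS.nonempty
  obtain ⟨k₂, hk₂, hk₁₂⟩ := hS.exists_gt k₁
  have hd : ∀ i ∈ T, u i = 0 ∧ v i = 0 := by
    intro i hi
    have h1 := ha k₁ hk₁ i hi
    have h2 := ha k₂ hk₂ i hi
    have hne : sk k₁ ≠ sk k₂ := ne_of_lt (hskdec k₁ k₂ hk₁₂)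
    have hv0 : v i = 0 := by
      have h3 : (sk k₁ - sk k₂) * v i = 0 := by linarith
      rcases mul_eq_zero.mp h3 with h4 | h4
      · exact absurd (by linarith : sk k₁ = sk k₂) hne
      · exact h4
    constructor
    · rw [hv0] at h1; linarith
    · exact hv0
  -- slack rows are nonnegative at ε₀
  have he : ∀ i : Fin m, 0 ≤ u i + ε₀ * v i := by
    intro i
    have hle : -(u i + ε₀ * v i) ≤ 0 := by
      apply le_zero_of_le_div hS (-(δ * v i))
      intro k hk
      have h1 := hb k hk i
      have hsk' : sk k = ε₀ - δ / ((k:ℚ) + 1) := by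
        simp only [hsk, hlam, mul_one_div]
      rw [hsk'] at h1
      have h2 : -(δ * v i) / ((k:ℚ) + 1) = -(δ / ((k:ℚ)+1) * v i) := by
        ring
      rw [h2]
      nlinarith [h1, sq_nonneg (v i)]
    linarith
  -- the aggregated affine function
  set U : ℚ := ∑ i ∈ I, u i with hU
  set V : ℚ := ∑ i ∈ I, v i with hV
  clear_value U V
  have hsum : ∀ k ∈ S, ∑ i ∈ I, (u i + sk k * v i) = U + sk k * V := by
    intro k hk
    rw [hU, hV, Finset.sum_add_distrib, Finset.mul_sum]
  have hGle : U + ε₀ * V ≤ 0 := by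
    apply le_zero_of_le_div hS (c1 + δ * V)
    intro k hk
    obtain ⟨-, h2⟩ := hc k hk
    rw [hsum k hk] at h2
    have hsk' : sk k = ε₀ - δ / ((k:ℚ) + 1) := by
      simp only [hsk, hlam, mul_one_div]
    have hlam' : lam k = 1 / ((k:ℚ) + 1) := by simp only [hlam]
    rw [hsk', hlam'] at h2
    have h3 : (c1 + δ * V) / ((k:ℚ)+1)
        = 1/((k:ℚ)+1) * c1 + δ/((k:ℚ)+1) * V := by
      ring
    rw [h3]
    linarith [h2]
  have hVneg : V < 0 := by
    obtain ⟨h1, h2⟩ := hc k₁ hk₁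
    rw [hsum k₁ hk₁] at h1
    have hsk' : sk k₁ = ε₀ - δ * lam k₁ := by simp only [hsk]
    rw [hsk'] at h1
    by_contra hVn
    push_neg at hVn
    have h3 : 0 ≤ δ * lam k₁ * V := mul_nonneg (mul_pos hδ (hlampos k₁)).le hVn
    nlinarith [h1, hGle]
  -- conclusion
  refine ⟨T, ⟨?_, ?_⟩, ⟨sk k₁, ?_, ne_of_lt (hsklt k₁)⟩⟩
  · -- ε₀ is an upper bound
    intro ε' hε'
    obtain ⟨x', h'e, h'i⟩ := hε'
    have hx'rep : x' = p + ε' • q := hrep x' ε' h'e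
    have hterm : ∀ i ∈ I, 0 ≤ u i + ε' * v i := by
      intro i hi
      by_cases hiT : i ∈ T
      · obtain ⟨hu0, hv0⟩ := hd i hiT
        rw [hu0, hv0]; simp
      · have h1 := h'i i hiT
        rw [hx'rep, hphi] at h1
        linarith
    have hsum' : 0 ≤ U + ε' * V := by
      have h1 : ∑ i ∈ I, (u i + ε' * v i) = U + ε' * V := by
        rw [hU, hV, Finset.sum_add_distrib, Finset.mul_sum]
      rw [← h1]
      exact Finset.sum_nonneg hterm
    by_contra hgt
    push_neg at hgt
    have h4 : (ε' - ε₀) * V < 0 := mul_neg_of_pos_of_neg (by linarith) hVneg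
    nlinarith [hGle, hsum', h4]
  · -- ε₀ is the least upper bound
    intro b hb'
    apply hb'
    refine ⟨p + ε₀ • q, fun i hi => ?_, fun i _ => ?_⟩
    · obtain ⟨hu0, hv0⟩ := hd i hi
      rw [hphi, hu0, hv0]; ring
    · rw [hphi]
      linarith [he i]
  · -- sk k₁ is a member distinct from ε₀
    refine ⟨xv k₁, fun i hi => (hTmem k₁ hk₁ i).mp hi, fun i _ => hfeas k₁ i⟩
end
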